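/- arXiv:cs/0106039 — 4 statements merged into one kernel-verified Lean document; each statement's English description precedes it below -/
import Mathlib

section
/- Let ρ₁ ≥ … ≥ ρ_n be the singular values of S (zero-padded) and Δ₁ ≥ … ≥ Δ_k ≥ 0 the topic dominances (with Δ_i = 0 for i > k). Then for every i, |ρ_i − Δ_i²| ≤ μ(C). -/
open scoped BigOperators
open Matrix

noncomputable def frobNorm {r s : ℕ} (M : Matrix (Fin r) (Fin s) ℝ) : ℝ :=
  Real.sqrt (∑ i, ∑ j, M i j ^ 2)

noncomputable def specNorm {r s : ℕ} (M : Matrix (Fin r) (Fin s) ℝ) : ℝ :=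
  sSup {c : ℝ | ∃ x : Fin s → ℝ, (∑ j, x j ^ 2) = 1 ∧
    c = Real.sqrt (∑ i, (M.mulVec x i) ^ 2)}

/-- `σ` enumerates the singular values of `M` in nonincreasing order,
    padded with zeros beyond index `s`. -/
def IsSingularValues {r s : ℕ} (M : Matrix (Fin r) (Fin s) ℝ) (σ : ℕ → ℝ) : Prop :=
  Antitone σ ∧ (∀ i, 0 ≤ σ i) ∧ (∀ i, s ≤ i → σ i = 0) ∧
  ∀ hH : (Mᵀ * M).IsHermitian,
    Multiset.map (fun i : Fin s => σ (i : ℕ) ^ 2) Finset.univ.val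
      = Multiset.map hH.eigenvalues Finset.univ.val

open Polynomial

private lemma dot_sum_orth {m : ℕ} {ι : Type*} [Fintype ι] [DecidableEq ι] (w : ι → Fin m → ℝ)
    (horth : ∀ j l, w j ⬝ᵥ w l = if j = l then 1 else 0) (c d : ι → ℝ) :
    (∑ j, c j • w j) ⬝ᵥ (∑ j, d j • w j) = ∑ j, c j * d j := by
  classical
  calc (∑ j, c j • w j) ⬝ᵥ (∑ j, d j • w j)
      = ∑ i, ∑ j, ∑ l, c j * d l * (w j i * w l i) := by
        simp only [dotProduct, Finset.sum_apply, Pi.smul_apply, smul_eq_mul]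
        exact Finset.sum_congr rfl fun i _ => (by
          rw [Finset.sum_mul_sum]
          exact Finset.sum_congr rfl fun j _ => Finset.sum_congr rfl fun l _ => by ring)
    _ = ∑ j, ∑ l, c j * d l * (w j ⬝ᵥ w l) := by
        rw [Finset.sum_comm]
        refine Finset.sum_congr rfl fun j _ => ?_
        rw [Finset.sum_comm]
        refine Finset.sum_congr rfl fun l _ => ?_
        rw [dotProduct, Finset.mul_sum]
    _ = ∑ j, c j * d j := by
        simp only [horth, mul_ite, mul_one, mul_zero]
        refine Finset.sum_congr rfl fun j _ => ?_
        rw [Finset.sum_ite_eq Finset.univ j]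
        simp

private lemma charpoly_orth_conj {m : ℕ} (W D : Matrix (Fin m) (Fin m) ℝ)
    (h1 : W * Wᵀ = 1) : (W * D * Wᵀ).charpoly = D.charpoly := by
  classical
  set f := (Polynomial.C : ℝ →+* Polynomial ℝ)
  have hmap1 : (W.map f) * (Wᵀ.map f) = 1 := by
    rw [← Matrix.map_mul, h1, Matrix.map_one _ (map_zero f) (map_one f)]
  have hmap2 : (Wᵀ.map f) * (W.map f) = 1 := mul_eq_one_comm.mp hmap1
  have key : charmatrix (W * D * Wᵀ) = W.map f * charmatrix D * Wᵀ.map f := by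
    unfold charmatrix
    rw [mul_sub, sub_mul]
    congr 1
    · rw [← (Matrix.scalar_commute (X : Polynomial ℝ) (fun r' => Commute.all _ _)
        (W.map f)).eq, mul_assoc, hmap1, mul_one]
    · simp only [RingHom.mapMatrix_apply, f]
      rw [← Matrix.map_mul, ← Matrix.map_mul]
  rw [Matrix.charpoly, key, det_mul, det_mul, mul_comm, ← mul_assoc, ← det_mul, hmap2]
  simp [Matrix.charpoly]

private lemma eig_multiset {m : ℕ} (A : Matrix (Fin m) (Fin m) ℝ) (hA : A.IsHermitian)
    (c : Fin m → ℝ) (w : Fin m → Fin m → ℝ)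
    (horth : ∀ j l, w j ⬝ᵥ w l = if j = l then 1 else 0)
    (heig : ∀ j, A *ᵥ w j = c j • w j) :
    Multiset.map hA.eigenvalues Finset.univ.val = Multiset.map c Finset.univ.val := by
  classical
  have main : ∀ (c : Fin m → ℝ) (w : Fin m → Fin m → ℝ),
      (∀ j l, w j ⬝ᵥ w l = if j = l then 1 else 0) →
      (∀ j, A *ᵥ w j = c j • w j) →
      A.charpoly = ∏ j, (X - Polynomial.C (c j)) := by
    intro c w horth heig
    set W : Matrix (Fin m) (Fin m) ℝ := Matrix.of fun d j => w j d with hW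
    have hWtW : Wᵀ * W = 1 := by
      ext j l
      simp only [Matrix.mul_apply, Matrix.transpose_apply, Matrix.one_apply, hW, Matrix.of_apply]
      simpa [dotProduct] using horth j l
    have hWWt : W * Wᵀ = 1 := mul_eq_one_comm.mp hWtW
    have hAW : A * W = W * Matrix.diagonal c := by
      ext d j
      have h := congrFun (heig j) d
      simp only [Matrix.mulVec, dotProduct, Pi.smul_apply, smul_eq_mul] at h
      simp only [Matrix.mul_apply, hW, Matrix.of_apply, Matrix.diagonal_apply, mul_ite, mul_zero]
      rw [Finset.sum_ite_eq' Finset.univ j]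
      simpa [mul_comm] using h
    have hA' : A = W * Matrix.diagonal c * Wᵀ := by
      calc A = A * (W * Wᵀ) := by rw [hWWt, mul_one]
      _ = (A * W) * Wᵀ := by rw [mul_assoc]
      _ = W * Matrix.diagonal c * Wᵀ := by rw [hAW]
    rw [hA', charpoly_orth_conj _ _ hWWt,
      Matrix.charpoly_of_upperTriangular _ (Matrix.blockTriangular_diagonal c)]
    simp
  have h1 := main c w horth heig
  have horth2 : ∀ j l, (fun j => (hA.eigenvectorBasis j : Fin m → ℝ)) j ⬝ᵥ
      (fun j => (hA.eigenvectorBasis j : Fin m → ℝ)) l = if j = l then 1 else 0 := by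
    intro j l
    have h := (orthonormal_iff_ite (𝕜 := ℝ)).mp hA.eigenvectorBasis.orthonormal j l
    rw [PiLp.inner_apply] at h
    simpa [dotProduct, RCLike.inner_apply, mul_comm] using h
  have h2 := main hA.eigenvalues (fun j => (hA.eigenvectorBasis j : Fin m → ℝ)) horth2
    (fun j => hA.mulVec_eigenvectorBasis j)
  have hroots : ∀ (a : Fin m → ℝ),
      (∏ j, (X - Polynomial.C (a j))).roots = Multiset.map a Finset.univ.val := by
    intro a
    have h := Polynomial.roots_multiset_prod_X_sub_C (Multiset.map a Finset.univ.val)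
    rwa [Multiset.map_map] at h
  calc Multiset.map hA.eigenvalues Finset.univ.val
      = (∏ j, (X - Polynomial.C (hA.eigenvalues j))).roots := (hroots _).symm
    _ = (∏ j, (X - Polynomial.C (c j))).roots := by rw [← h2, h1]
    _ = Multiset.map c Finset.univ.val := hroots _

private lemma li_of_orth {m : ℕ} {ι : Type*} [Fintype ι] [DecidableEq ι] (w : ι → Fin m → ℝ)
    (horth : ∀ j l, w j ⬝ᵥ w l = if j = l then 1 else 0) : LinearIndependent ℝ w := by
  rw [Fintype.linearIndependent_iff]
  intro g hg i
  have hwi : w i = ∑ j, (fun l => if l = i then (1:ℝ) else 0) j • w j := by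
    simp [ite_smul, Finset.sum_ite_eq' Finset.univ i]
  have h := dot_sum_orth w horth g (fun l => if l = i then (1:ℝ) else 0)
  rw [hg, ← hwi] at h
  simpa [zero_dotProduct, Finset.sum_ite_eq' Finset.univ i] using h.symm

private lemma dot_mulVec_mulVec {p q : ℕ} (M : Matrix (Fin p) (Fin q) ℝ) (a b : Fin q → ℝ) :
    (M *ᵥ a) ⬝ᵥ (M *ᵥ b) = a ⬝ᵥ ((Mᵀ * M) *ᵥ b) := by
  rw [← Matrix.mulVec_mulVec, Matrix.dotProduct_mulVec a, Matrix.vecMul_transpose]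

private lemma dot_mulVec_symm {p : ℕ} (N : Matrix (Fin p) (Fin p) ℝ) (hN : Nᵀ = N)
    (y z : Fin p → ℝ) : y ⬝ᵥ (N *ᵥ z) = (N *ᵥ y) ⬝ᵥ z := by
  rw [Matrix.dotProduct_mulVec]
  have h : y ᵥ* N = N *ᵥ y := by conv_lhs => rw [← hN, Matrix.vecMul_transpose]
  rw [h]

private lemma card_val_lt {m i : ℕ} (h : i ≤ m) :
    Fintype.card {j : Fin m // (j : ℕ) < i} = i := by
  have e : {j : Fin m // (j : ℕ) < i} ≃ Fin i :=
    { toFun := fun j => ⟨j.1.1, j.2⟩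
      invFun := fun j => ⟨⟨j.1, lt_of_lt_of_le j.2 h⟩, j.2⟩
      left_inv := fun j => by ext; rfl
      right_inv := fun j => by ext; rfl }
  rw [Fintype.card_congr e, Fintype.card_fin]

private lemma quad_form_abs_le {m : ℕ} (E : Matrix (Fin m) (Fin m) ℝ) (y : Fin m → ℝ) :
    |∑ j, ∑ l, E j l * (y j * y l)| ≤ Real.sqrt (∑ j, ∑ l, E j l ^ 2) * ∑ j, y j ^ 2 := by
  have hCS := Finset.sum_mul_sq_le_sq_mul_sq (Finset.univ ×ˢ Finset.univ)
      (fun p : Fin m × Fin m => E p.1 p.2) (fun p => y p.1 * y p.2)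
  rw [Finset.sum_product] at hCS
  rw [Finset.sum_product] at hCS
  rw [Finset.sum_product] at hCS
  have h2 : ∑ j, ∑ l, (y j * y l) ^ 2 = (∑ j, y j ^ 2) * (∑ j, y j ^ 2) := by
    rw [Finset.sum_mul_sum]
    exact Finset.sum_congr rfl fun j _ => Finset.sum_congr rfl fun l _ => by ring
  rw [h2] at hCS
  have hy0 : (0:ℝ) ≤ ∑ j, y j ^ 2 := Finset.sum_nonneg fun j _ => sq_nonneg _
  have hE0 : (0:ℝ) ≤ ∑ j, ∑ l, E j l ^ 2 :=
    Finset.sum_nonneg fun j _ => Finset.sum_nonneg fun l _ => sq_nonneg _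
  calc |∑ j, ∑ l, E j l * (y j * y l)|
      = Real.sqrt ((∑ j, ∑ l, E j l * (y j * y l)) ^ 2) := (Real.sqrt_sq_eq_abs _).symm
    _ ≤ Real.sqrt ((∑ j, ∑ l, E j l ^ 2) * ((∑ j, y j ^ 2) * (∑ j, y j ^ 2))) :=
        Real.sqrt_le_sqrt hCS
    _ = Real.sqrt (∑ j, ∑ l, E j l ^ 2) * ∑ j, y j ^ 2 := by
        rw [Real.sqrt_mul hE0, Real.sqrt_mul_self hy0]

private lemma quad_expand {p : ℕ} (N : Matrix (Fin p) (Fin p) ℝ) (y : Fin p → ℝ) :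
    y ⬝ᵥ (N *ᵥ y) = ∑ j, ∑ l, N j l * (y j * y l) := by
  simp only [dotProduct, Matrix.mulVec, Finset.mul_sum]
  exact Finset.sum_congr rfl fun j _ => Finset.sum_congr rfl fun l _ => by ring

private lemma quad_split {p : ℕ} (N : Matrix (Fin p) (Fin p) ℝ) (y : Fin p → ℝ) :
    y ⬝ᵥ (N *ᵥ y) = (∑ j, N j j * y j ^ 2)
      + ∑ j, ∑ l, (if j = l then 0 else N j l) * (y j * y l) := by
  rw [quad_expand]
  rw [← Finset.sum_add_distrib]
  refine Finset.sum_congr rfl fun j _ => ?_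
  have hterm : ∀ l, N j l * (y j * y l) = (if j = l then N j l * (y j * y l) else 0)
      + (if j = l then 0 else N j l) * (y j * y l) := by
    intro l; split <;> simp
  calc ∑ l, N j l * (y j * y l)
      = ∑ l, ((if j = l then N j l * (y j * y l) else 0)
        + (if j = l then 0 else N j l) * (y j * y l)) :=
        Finset.sum_congr rfl fun l _ => hterm l
    _ = _ := by
        rw [Finset.sum_add_distrib]
        congr 1
        rw [Finset.sum_ite_eq Finset.univ j, if_pos (Finset.mem_univ j)]
        ring

set_option maxHeartbeats 2000000 in
theorem singular_values_of_S_near_dominances {n k : ℕ} (Rel : Fin k → Fin n → ℝ)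
    (hnorm : ∀ d, ∑ t, Rel t d ^ 2 = 1)
    (S : Matrix (Fin n) (Fin n) ℝ)
    (hS : ∀ d d', S d d' = ∑ t, Rel t d * Rel t d')
    (Δ : Fin k → ℝ) (hΔ : ∀ t, Δ t = Real.sqrt (∑ d, Rel t d ^ 2))
    (hsort : ∀ t t' : Fin k, t ≤ t' → Δ t' ≤ Δ t)
    (Δpad : ℕ → ℝ)
    (hΔpad : ∀ i : ℕ, Δpad i = if h : i < k then Δ ⟨i, h⟩ else 0)
    (μ : ℝ)
    (hμ : μ = Real.sqrt (∑ t, ∑ t',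
      if t ≠ t' then (∑ d, Rel t d * Rel t' d) ^ 2 else 0))
    (ρ : ℕ → ℝ) (hρ : IsSingularValues S ρ) :
    ∀ i, |ρ i - Δpad i ^ 2| ≤ μ := by
  classical
  obtain ⟨hanti, hρ0, hρzero, hmul⟩ := hρ
  have hμ0 : 0 ≤ μ := hμ ▸ Real.sqrt_nonneg _
  have hΔ0 : ∀ t, 0 ≤ Δ t := fun t => (hΔ t) ▸ Real.sqrt_nonneg _
  have hΔpad0 : ∀ i, 0 ≤ Δpad i := by
    intro i; rw [hΔpad]; split
    · exact hΔ0 _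
    · exact le_refl 0
  have hΔsq : ∀ t, Δ t ^ 2 = ∑ d, Rel t d ^ 2 := fun t => by
    rw [hΔ t]; exact Real.sq_sqrt (Finset.sum_nonneg fun d _ => sq_nonneg _)
  set Rm : Matrix (Fin k) (Fin n) ℝ := Matrix.of Rel with hRm
  have hSfact : S = Rmᵀ * Rm := by
    ext d d'; rw [hS]; simp [Matrix.mul_apply, hRm]
  set N : Matrix (Fin k) (Fin k) ℝ := Rm * Rmᵀ with hNdef
  have hNsymm : Nᵀ = N := by rw [hNdef, Matrix.transpose_mul, Matrix.transpose_transpose]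
  have hNdiag : ∀ j, N j j = Δ j ^ 2 := by
    intro j; rw [hΔsq, hNdef]; simp [Matrix.mul_apply, hRm, sq]
  have hμE : μ = Real.sqrt (∑ j, ∑ l, (if j = l then 0 else N j l) ^ 2) := by
    rw [hμ]; congr 1
    refine Finset.sum_congr rfl fun j _ => Finset.sum_congr rfl fun l _ => ?_
    by_cases h : j = l <;> simp [h, hNdef, Matrix.mul_apply, hRm]
  have hSsym : S.IsHermitian := by
    show Sᴴ = S
    ext d d'
    simp only [Matrix.conjTranspose_apply, hS, star_trivial]
    exact Finset.sum_congr rfl fun t _ => mul_comm _ _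
  set lam : Fin n → ℝ := hSsym.eigenvalues with hlamdef
  set w : Fin n → (Fin n → ℝ) := fun j => (hSsym.eigenvectorBasis j : Fin n → ℝ) with hwdef
  have horthw : ∀ j l, w j ⬝ᵥ w l = if j = l then 1 else 0 := by
    intro j l
    have h := (orthonormal_iff_ite (𝕜 := ℝ)).mp hSsym.eigenvectorBasis.orthonormal j l
    rw [PiLp.inner_apply] at h
    simpa [dotProduct, RCLike.inner_apply, mul_comm] using h
  have heigw : ∀ j, S *ᵥ w j = lam j • w j := fun j => hSsym.mulVec_eigenvectorBasis j
  have hlam0 : ∀ j, 0 ≤ lam j := by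
    intro j
    have hpsd : S.PosSemidef := by
      rw [hSfact]
      have h := Matrix.posSemidef_conjTranspose_mul_self Rm
      have hct : Rmᴴ = Rmᵀ := by ext a b; simp [Matrix.conjTranspose_apply]
      rwa [hct] at h
    exact hpsd.eigenvalues_nonneg j
  have hST : Sᵀ = S := by
    have h : Sᴴ = Sᵀ := by ext a b; simp [Matrix.conjTranspose_apply]
    rw [← h]; exact hSsym
  have hH : (Sᵀ * S).IsHermitian := by
    show (Sᵀ * S)ᴴ = Sᵀ * S
    rw [hST, Matrix.conjTranspose_mul, hSsym.eq]
  have heig2 : ∀ j, (Sᵀ * S) *ᵥ w j = (lam j ^ 2) • w j := by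
    intro j
    rw [hST, ← Matrix.mulVec_mulVec, heigw, Matrix.mulVec_smul, heigw, smul_smul, sq]
  have hsqeq : Multiset.map (fun j : Fin n => ρ (j:ℕ) ^ 2) Finset.univ.val
      = Multiset.map (fun j => lam j ^ 2) Finset.univ.val :=
    (hmul hH).trans (eig_multiset _ hH (fun j => lam j ^ 2) w horthw heig2)
  have hme : Multiset.map (fun j : Fin n => ρ (j:ℕ)) Finset.univ.val
      = Multiset.map lam Finset.univ.val := by
    have h := congrArg (Multiset.map Real.sqrt) hsqeq
    rw [Multiset.map_map, Multiset.map_map] at h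
    have h1 : Multiset.map (Real.sqrt ∘ fun j : Fin n => ρ (j:ℕ) ^ 2) Finset.univ.val
        = Multiset.map (fun j : Fin n => ρ (j:ℕ)) Finset.univ.val :=
      Multiset.map_congr rfl fun j _ => by
        simp [Function.comp, Real.sqrt_sq (hρ0 (j:ℕ))]
    have h2 : Multiset.map (Real.sqrt ∘ fun j : Fin n => lam j ^ 2) Finset.univ.val
        = Multiset.map lam Finset.univ.val :=
      Multiset.map_congr rfl fun j _ => by
        simp [Function.comp, Real.sqrt_sq (hlam0 j)]
    rw [h1, h2] at h; exact h
  have hcount : ∀ (p : ℝ → Prop) (inst : DecidablePred p),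
      (Finset.univ.filter (fun j : Fin n => p (ρ (j:ℕ)))).card
        = (Finset.univ.filter (fun j : Fin n => p (lam j))).card := by
    intro p inst
    have h := congrArg (Multiset.countP p) hme
    rw [Multiset.countP_map, Multiset.countP_map] at h
    exact h
  -- generic: mulVec of eigen combination
  have hSmulsum : ∀ {ι : Type} [Fintype ι] (v : ι → Fin n → ℝ) (lv : ι → ℝ) (c : ι → ℝ),
      (∀ j, S *ᵥ v j = lv j • v j) →
      S *ᵥ (∑ j, c j • v j) = ∑ j, (c j * lv j) • v j := by
    intro ι _ v lv c hv
    have h0 : S *ᵥ (∑ j, c j • v j) = S.mulVecLin (∑ j, c j • v j) := rfl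
    rw [h0, map_sum]
    refine Finset.sum_congr rfl fun j _ => ?_
    rw [LinearMap.map_smul, Matrix.mulVecLin_apply, hv j, smul_smul]
  have horthsub : ∀ (Q : Fin n → Prop) (j l : {j : Fin n // Q j}),
      w j.1 ⬝ᵥ w l.1 = if j = l then 1 else 0 := by
    intro Q j l
    rw [horthw]
    by_cases h : j = l
    · simp [h]
    · rw [if_neg (fun hv => h (Subtype.ext hv)), if_neg h]
  have hyysq : ∀ {p : ℕ} (y : Fin p → ℝ), y ⬝ᵥ y = ∑ j, y j ^ 2 := by
    intro p y; simp [dotProduct, sq]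
  clear_value lam w
  -- PART A : ρ i ≤ Δpad i ^ 2 + μ
  have partA : ∀ i : ℕ, ρ i ≤ Δpad i ^ 2 + μ := by
    intro i
    by_contra hcon
    push_neg at hcon
    set t : ℝ := Δpad i ^ 2 + μ with htdef
    have ht0 : 0 ≤ t := add_nonneg (sq_nonneg _) hμ0
    have hin : i < n := by
      by_contra hn; push_neg at hn
      rw [hρzero i hn] at hcon
      exact absurd (lt_of_le_of_lt ht0 hcon) (lt_irrefl 0)
    have hsubA : (Finset.univ.filter (fun j : Fin n => (j:ℕ) ≤ i))
        ⊆ (Finset.univ.filter (fun j : Fin n => t < ρ (j:ℕ))) := by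
      intro j hj
      rw [Finset.mem_filter] at hj ⊢
      exact ⟨hj.1, lt_of_lt_of_le hcon (hanti hj.2)⟩
    have hcard0 : (Finset.univ.filter (fun j : Fin n => (j:ℕ) ≤ i)).card = i + 1 := by
      rw [← Fintype.card_subtype]
      rw [Fintype.card_congr (Equiv.subtypeEquivRight
        (fun j : Fin n => (Nat.lt_succ_iff (m := (j:ℕ)) (n := i)).symm))]
      exact card_val_lt hin
    have hcard1 : i + 1 ≤ (Finset.univ.filter (fun j : Fin n => t < lam j)).card := by
      rw [← hcount (fun x => t < x) inferInstance, ← hcard0]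
      exact Finset.card_le_card hsubA
    set P : Fin n → Prop := fun j => t < lam j with hP
    set V := Submodule.span ℝ (Set.range fun j : {j : Fin n // P j} => w j.1) with hV
    have hliV : LinearIndependent ℝ (fun j : {j : Fin n // P j} => w j.1) :=
      li_of_orth _ (horthsub P)
    have hfrV : Module.finrank ℝ V = Fintype.card {j : Fin n // P j} :=
      finrank_span_eq_card hliV
    have hdec : ∀ x ∈ V, ∃ c : {j : Fin n // P j} → ℝ, x = ∑ j, c j • w j.1 := by
      intro x hx
      obtain ⟨c, hc⟩ := (Submodule.mem_span_range_iff_exists_fun ℝ).mp hx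
      exact ⟨c, hc.symm⟩
    set T := Rm.mulVecLin with hT
    set W := V.map T with hWdef
    have hcne : ∀ (c : {j : Fin n // P j} → ℝ), (∑ j, c j • w j.1) ≠ 0 → ∃ j, c j ≠ 0 := by
      intro c hne
      by_contra hall; push_neg at hall
      exact hne (by simp [hall])
    have hposdiag : ∀ (c : {j : Fin n // P j} → ℝ), (∃ j, c j ≠ 0) →
        0 < ∑ j, c j * (c j * lam j.1) := by
      intro c ⟨j0, hj0⟩
      apply Finset.sum_pos'
      · intro j _
        have hl : 0 ≤ lam j.1 := hlam0 j.1
        nlinarith [sq_nonneg (c j)]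
      · refine ⟨j0, Finset.mem_univ j0, ?_⟩
        have hl : 0 < lam j0.1 := lt_of_le_of_lt ht0 j0.2
        have hc2 : 0 < c j0 ^ 2 :=
          lt_of_le_of_ne (sq_nonneg _) (Ne.symm (pow_ne_zero 2 hj0))
        nlinarith
    have hTinj : ∀ x ∈ V, T x = 0 → x = 0 := by
      intro x hx h0
      by_contra hxne
      obtain ⟨c, hc⟩ := hdec x hx
      have h1 : x ⬝ᵥ (S *ᵥ x) = 0 := by
        rw [hSfact, ← dot_mulVec_mulVec, show Rm *ᵥ x = T x from rfl, h0]
        simp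
      have h2 : x ⬝ᵥ (S *ᵥ x) = ∑ j, c j * (c j * lam j.1) := by
        rw [hc, hSmulsum (fun j : {j : Fin n // P j} => w j.1) (fun j => lam j.1) c
          (fun j => heigw j.1), dot_sum_orth _ (horthsub P)]
      have hxne' : (∑ j, c j • w j.1) ≠ 0 := by rw [← hc]; exact hxne
      have h3 := hposdiag c (hcne c hxne')
      rw [h2] at h1; linarith
    have hfrW : Module.finrank ℝ W = Module.finrank ℝ V := by
      rw [hWdef, ← LinearMap.range_domRestrict]
      apply LinearMap.finrank_range_of_inj
      rw [← LinearMap.ker_eq_bot, LinearMap.ker_eq_bot']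
      intro a ha
      rw [LinearMap.domRestrict_apply] at ha
      exact Subtype.ext (hTinj a.1 a.2 ha)
    have hWbound : ∀ y ∈ W, (∀ j : Fin k, (j:ℕ) < i → y j = 0) → y = 0 := by
      intro y hy hysup
      by_contra hyne
      obtain ⟨x, hxV, hxy⟩ := Submodule.mem_map.mp hy
      have hxne : x ≠ 0 := by
        rintro rfl; exact hyne (by rw [← hxy]; simp)
      obtain ⟨c, hc⟩ := hdec x hxV
      have hyy : y ⬝ᵥ y = ∑ j, c j * (c j * lam j.1) := by
        rw [← hxy, show T x = Rm *ᵥ x from rfl, dot_mulVec_mulVec, ← hSfact, hc,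
          hSmulsum (fun j : {j : Fin n // P j} => w j.1) (fun j => lam j.1) c
            (fun j => heigw j.1), dot_sum_orth _ (horthsub P)]
      have hyNy : y ⬝ᵥ (N *ᵥ y) = ∑ j, c j * (c j * lam j.1 * lam j.1) := by
        rw [← hxy, show T x = Rm *ᵥ x from rfl]
        have hstep : N *ᵥ (Rm *ᵥ x) = Rm *ᵥ (S *ᵥ x) := by
          rw [hSfact, hNdef, Matrix.mulVec_mulVec, Matrix.mulVec_mulVec, Matrix.mul_assoc]
        rw [hstep, dot_mulVec_mulVec, ← hSfact, hc,
          hSmulsum (fun j : {j : Fin n // P j} => w j.1) (fun j => lam j.1) c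
            (fun j => heigw j.1),
          hSmulsum (fun j : {j : Fin n // P j} => w j.1) (fun j => lam j.1)
            (fun j => c j * lam j.1) (fun j => heigw j.1),
          dot_sum_orth _ (horthsub P)]
      have hstrict : t * (y ⬝ᵥ y) < y ⬝ᵥ (N *ᵥ y) := by
        rw [hyy, hyNy, Finset.mul_sum]
        apply Finset.sum_lt_sum
        · intro j _
          have hl : t < lam j.1 := j.2
          have hkey : 0 ≤ c j ^ 2 * lam j.1 * (lam j.1 - t) :=
            mul_nonneg (mul_nonneg (sq_nonneg _) (hlam0 j.1)) (sub_nonneg.mpr hl.le)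
          nlinarith [hkey]
        · have hxne' : (∑ j, c j • w j.1) ≠ 0 := by rw [← hc]; exact hxne
          obtain ⟨j0, hj0⟩ := hcne c hxne'
          refine ⟨j0, Finset.mem_univ j0, ?_⟩
          have hl : t < lam j0.1 := j0.2
          have hlp : 0 < lam j0.1 := lt_of_le_of_lt ht0 hl
          have hc2 : 0 < c j0 ^ 2 :=
            lt_of_le_of_ne (sq_nonneg _) (Ne.symm (pow_ne_zero 2 hj0))
          have hkey : 0 < c j0 ^ 2 * lam j0.1 * (lam j0.1 - t) :=
            mul_pos (mul_pos hc2 hlp) (sub_pos.mpr hl)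
          nlinarith [hkey]
      have hupper : y ⬝ᵥ (N *ᵥ y) ≤ t * (y ⬝ᵥ y) := by
        rw [quad_split]
        have hdiag : ∑ j, N j j * y j ^ 2 ≤ Δpad i ^ 2 * ∑ j, y j ^ 2 := by
          rw [Finset.mul_sum]
          apply Finset.sum_le_sum
          intro j _
          by_cases hyj : y j = 0
          · simp [hyj]
          · have hji : i ≤ (j:ℕ) := by
              by_contra hlt; push_neg at hlt; exact hyj (hysup j hlt)
            have hik : i < k := lt_of_le_of_lt hji j.2
            rw [hNdiag]
            have hle : Δ j ≤ Δ ⟨i, hik⟩ := hsort ⟨i, hik⟩ j hji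
            have hd : Δpad i = Δ ⟨i, hik⟩ := by rw [hΔpad, dif_pos hik]
            rw [hd]
            nlinarith [mul_nonneg (mul_nonneg (sub_nonneg.mpr hle)
              (add_nonneg (hΔ0 j) (hΔ0 ⟨i, hik⟩))) (sq_nonneg (y j))]
        have hEb : ∑ j, ∑ l, (if j = l then 0 else N j l) * (y j * y l)
            ≤ μ * ∑ j, y j ^ 2 := by
          have h := quad_form_abs_le (fun j l => if j = l then 0 else N j l) y
          rw [← hμE] at h
          exact le_trans (le_abs_self _) h
        rw [hyysq y]
        calc (∑ j, N j j * y j ^ 2) + ∑ j, ∑ l, (if j = l then 0 else N j l) * (y j * y l)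
            ≤ Δpad i ^ 2 * (∑ j, y j ^ 2) + μ * ∑ j, y j ^ 2 := add_le_add hdiag hEb
          _ = t * ∑ j, y j ^ 2 := by rw [htdef]; ring
      linarith
    have hfrWge : i + 1 ≤ Module.finrank ℝ W := by
      rw [hfrW, hfrV, Fintype.card_subtype]
      exact hcard1
    have hfrWle : Module.finrank ℝ W ≤ i := by
      set π := LinearMap.funLeft ℝ ℝ (Subtype.val : {j : Fin k // (j:ℕ) < i} → Fin k) with hπ
      have hinj : Function.Injective (π.domRestrict W) := by
        rw [← LinearMap.ker_eq_bot, LinearMap.ker_eq_bot']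
        intro a ha
        rw [LinearMap.domRestrict_apply] at ha
        refine Subtype.ext (hWbound a.1 a.2 fun j hj => ?_)
        have := congrFun ha ⟨j, hj⟩
        simpa [hπ, LinearMap.funLeft_apply] using this
      have h1 := LinearMap.finrank_le_finrank_of_injective hinj
      rw [Module.finrank_pi] at h1
      refine le_trans h1 ?_
      have h2 : Function.Injective
          (fun j : {j : Fin k // (j:ℕ) < i} => (⟨j.1.1, j.2⟩ : Fin i)) := by
        intro a b hab
        have hvv := congrArg Fin.val hab
        simp only at hvv
        exact Subtype.ext (Fin.ext hvv)
      have := Fintype.card_le_of_injective _ h2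
      rwa [Fintype.card_fin] at this
    omega
  -- PART B : Δpad i ^ 2 ≤ ρ i + μ
  have partB : ∀ i : ℕ, Δpad i ^ 2 ≤ ρ i + μ := by
    intro i
    rcases Nat.lt_or_ge i k with hik | hik
    swap
    · rw [hΔpad, dif_neg (not_lt.mpr hik)]
      have := hρ0 i
      nlinarith
    by_contra hcon
    push_neg at hcon
    set t : ℝ := Δpad i ^ 2 - μ with htdef
    have htρ : ρ i < t := by rw [htdef]; linarith
    have ht0 : 0 < t := lt_of_le_of_lt (hρ0 i) htρ
    -- the coordinate subspace U'
    set esub : {j : Fin k // (j:ℕ) ≤ i} → (Fin k → ℝ) := fun j => Pi.single j.1 1 with hesub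
    have horthe : ∀ j l, esub j ⬝ᵥ esub l = if j = l then 1 else 0 := by
      intro j l
      rw [show esub j = Pi.single j.1 1 from rfl, show esub l = Pi.single l.1 1 from rfl,
        dotProduct_single, mul_one, Pi.single_apply]
      by_cases h : j = l
      · simp [h]
      · rw [if_neg (fun hv : l.1 = j.1 => h (Subtype.ext hv.symm)), if_neg h]
    set U' := Submodule.span ℝ (Set.range esub) with hU'
    have hliU : LinearIndependent ℝ esub := li_of_orth _ horthe
    have hfrU : Module.finrank ℝ U' = i + 1 := by
      rw [hU', finrank_span_eq_card hliU,
        Fintype.card_congr (Equiv.subtypeEquivRight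
          (fun j : Fin k => (Nat.lt_succ_iff (m := (j:ℕ)) (n := i)).symm))]
      exact card_val_lt hik
    have hdecU : ∀ y ∈ U', ∃ c : {j : Fin k // (j:ℕ) ≤ i} → ℝ, y = ∑ j, c j • esub j := by
      intro y hy
      obtain ⟨c, hc⟩ := (Submodule.mem_span_range_iff_exists_fun ℝ).mp hy
      exact ⟨c, hc.symm⟩
    have hsupp : ∀ y ∈ U', ∀ j : Fin k, i < (j:ℕ) → y j = 0 := by
      intro y hy j hj
      obtain ⟨c, hc⟩ := hdecU y hy
      rw [hc, Finset.sum_apply]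
      apply Finset.sum_eq_zero
      intro l _
      have hne : j ≠ l.1 := by
        intro hv
        have h2 := l.2
        rw [← hv] at h2
        omega
      simp [hesub, Pi.single_apply, hne]
    have hreyl : ∀ y ∈ U', t * (y ⬝ᵥ y) ≤ y ⬝ᵥ (N *ᵥ y) := by
      intro y hy
      rw [quad_split, hyysq y]
      have hdiag : Δpad i ^ 2 * (∑ j, y j ^ 2) ≤ ∑ j, N j j * y j ^ 2 := by
        rw [Finset.mul_sum]
        apply Finset.sum_le_sum
        intro j _
        by_cases hyj : y j = 0
        · simp [hyj]
        · have hji : (j:ℕ) ≤ i := by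
            by_contra hlt; push_neg at hlt; exact hyj (hsupp y hy j hlt)
          rw [hNdiag]
          have hle : Δ ⟨i, hik⟩ ≤ Δ j := hsort j ⟨i, hik⟩ hji
          have hd : Δpad i = Δ ⟨i, hik⟩ := by rw [hΔpad, dif_pos hik]
          rw [hd]
          nlinarith [mul_nonneg (mul_nonneg (sub_nonneg.mpr hle)
            (add_nonneg (hΔ0 ⟨i, hik⟩) (hΔ0 j))) (sq_nonneg (y j))]
      have hEb : -(μ * ∑ j, y j ^ 2)
          ≤ ∑ j, ∑ l, (if j = l then 0 else N j l) * (y j * y l) := by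
        have h := quad_form_abs_le (fun j l => if j = l then 0 else N j l) y
        rw [← hμE] at h
        have h2 := neg_abs_le (∑ j, ∑ l, (if j = l then 0 else N j l) * (y j * y l))
        linarith
      have hexp : t * (∑ j, y j ^ 2)
          = Δpad i ^ 2 * (∑ j, y j ^ 2) - μ * ∑ j, y j ^ 2 := by rw [htdef]; ring
      rw [hexp]
      linarith
    set T' := (Rmᵀ).mulVecLin with hT'
    set Xs := U'.map T' with hXdef
    have hT'dot : ∀ y : Fin k → ℝ, (Rmᵀ *ᵥ y) ⬝ᵥ (Rmᵀ *ᵥ y) = y ⬝ᵥ (N *ᵥ y) := by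
      intro y
      rw [dot_mulVec_mulVec, Matrix.transpose_transpose, ← hNdef]
    have hT'inj : ∀ y ∈ U', T' y = 0 → y = 0 := by
      intro y hy h0
      have h1 : y ⬝ᵥ (N *ᵥ y) = 0 := by
        rw [← hT'dot, show Rmᵀ *ᵥ y = T' y from rfl, h0]; simp
      have h2 := hreyl y hy
      rw [h1, hyysq y] at h2
      have hsum : (∑ j, y j ^ 2) ≤ 0 := by
        by_contra hpos; push_neg at hpos
        have := mul_pos ht0 hpos
        linarith
      have hsum0 : (∑ j, y j ^ 2) = 0 :=
        le_antisymm hsum (Finset.sum_nonneg fun j _ => sq_nonneg _)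
      funext j
      have hj := (Finset.sum_eq_zero_iff_of_nonneg
        (fun j _ => sq_nonneg (y j))).mp hsum0 j (Finset.mem_univ j)
      have : y j = 0 := by
        have h3 : y j ^ 2 = 0 := hj
        nlinarith [sq_nonneg (y j)]
      simpa using this
    have hfrX : Module.finrank ℝ Xs = i + 1 := by
      have hinj : Function.Injective (T'.domRestrict U') := by
        rw [← LinearMap.ker_eq_bot, LinearMap.ker_eq_bot']
        intro a ha
        rw [LinearMap.domRestrict_apply] at ha
        exact Subtype.ext (hT'inj a.1 a.2 ha)
      rw [hXdef, ← LinearMap.range_domRestrict, LinearMap.finrank_range_of_inj hinj, hfrU]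
    have hiltn : i < n := by
      have h1 : Module.finrank ℝ Xs ≤ Module.finrank ℝ (Fin n → ℝ) := Xs.finrank_le
      rw [hfrX, Module.finrank_pi, Fintype.card_fin] at h1
      omega
    set Q : Fin n → Prop := fun j => lam j ≤ ρ i with hQ
    set Y := Submodule.span ℝ (Set.range fun j : {j : Fin n // Q j} => w j.1) with hY
    have hfrY : Module.finrank ℝ Y = Fintype.card {j : Fin n // Q j} :=
      finrank_span_eq_card (li_of_orth _ (horthsub Q))
    have hcardY : n - i ≤ Fintype.card {j : Fin n // Q j} := by
      rw [Fintype.card_subtype]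
      rw [← hcount (fun x => x ≤ ρ i) inferInstance]
      have hsub : (Finset.univ.filter (fun j : Fin n => i ≤ (j:ℕ)))
          ⊆ (Finset.univ.filter (fun j : Fin n => ρ (j:ℕ) ≤ ρ i)) := by
        intro j hj
        rw [Finset.mem_filter] at hj ⊢
        exact ⟨hj.1, hanti hj.2⟩
      refine le_trans ?_ (Finset.card_le_card hsub)
      have h1 : (Finset.univ.filter (fun j : Fin n => i ≤ (j:ℕ))).card
          = Fintype.card {j : Fin n // ¬ ((j:ℕ) < i)} := by
        rw [Fintype.card_subtype]
        congr 1
        ext j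
        simp [not_lt]
      rw [h1, Fintype.card_subtype_compl, card_val_lt (le_of_lt hiltn), Fintype.card_fin]
    have hXY : Xs ⊓ Y ≠ ⊥ := by
      intro hbot
      have h1 := Submodule.finrank_sup_add_finrank_inf_eq Xs Y
      rw [hbot, finrank_bot] at h1
      have h2 : Module.finrank ℝ ↥(Xs ⊔ Y) ≤ n := by
        have h3 := Submodule.finrank_le (Xs ⊔ Y)
        rwa [Module.finrank_pi, Fintype.card_fin] at h3
      have h4 : n - i ≤ Module.finrank ℝ Y := by rw [hfrY]; exact hcardY
      rw [hfrX] at h1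
      omega
    obtain ⟨x, hxmem, hxne⟩ := Submodule.exists_mem_ne_zero_of_ne_bot hXY
    have hxX : x ∈ Xs := hxmem.1
    have hxY : x ∈ Y := hxmem.2
    obtain ⟨c, hc⟩ := (Submodule.mem_span_range_iff_exists_fun ℝ).mp hxY
    have hup : x ⬝ᵥ (S *ᵥ x) ≤ ρ i * (x ⬝ᵥ x) := by
      rw [← hc, hSmulsum (fun j : {j : Fin n // Q j} => w j.1) (fun j => lam j.1) c
        (fun j => heigw j.1), dot_sum_orth _ (horthsub Q), dot_sum_orth _ (horthsub Q),
        Finset.mul_sum]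
      apply Finset.sum_le_sum
      intro j _
      have hl : lam j.1 ≤ ρ i := j.2
      nlinarith [mul_nonneg (sub_nonneg.mpr hl) (sq_nonneg (c j))]
    obtain ⟨y, hyU, hyx⟩ := Submodule.mem_map.mp hxX
    have hyyN : x ⬝ᵥ x = y ⬝ᵥ (N *ᵥ y) := by
      rw [← hyx, show T' y = Rmᵀ *ᵥ y from rfl, hT'dot]
    have hxSx : x ⬝ᵥ (S *ᵥ x) = (N *ᵥ y) ⬝ᵥ (N *ᵥ y) := by
      rw [← hyx, show T' y = Rmᵀ *ᵥ y from rfl]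
      have hstep : S *ᵥ (Rmᵀ *ᵥ y) = Rmᵀ *ᵥ (N *ᵥ y) := by
        rw [hSfact, hNdef, Matrix.mulVec_mulVec, Matrix.mulVec_mulVec, Matrix.mul_assoc]
      rw [hstep, dot_mulVec_mulVec, Matrix.transpose_transpose, ← hNdef,
        dot_mulVec_symm N hNsymm]
    have hCS : (y ⬝ᵥ (N *ᵥ y)) ^ 2 ≤ (y ⬝ᵥ y) * ((N *ᵥ y) ⬝ᵥ (N *ᵥ y)) := by
      have h := Finset.sum_mul_sq_le_sq_mul_sq Finset.univ y (N *ᵥ y)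
      rw [← hyysq y, ← hyysq (N *ᵥ y)] at h
      exact h
    have hyne : y ≠ 0 := by
      rintro rfl
      exact hxne (by rw [← hyx]; simp)
    have hyypos : 0 < y ⬝ᵥ y := by
      rw [hyysq y]
      apply Finset.sum_pos' (fun j _ => sq_nonneg _)
      obtain ⟨j, hj⟩ := Function.ne_iff.mp hyne
      exact ⟨j, Finset.mem_univ j,
        lt_of_le_of_ne (sq_nonneg _) (Ne.symm (pow_ne_zero 2 hj))⟩
    have hr := hreyl y hyU
    have hyNypos : 0 < y ⬝ᵥ (N *ᵥ y) := lt_of_lt_of_le (mul_pos ht0 hyypos) hr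
    have hupper' : (N *ᵥ y) ⬝ᵥ (N *ᵥ y) ≤ ρ i * (y ⬝ᵥ (N *ᵥ y)) := by
      rw [← hxSx, ← hyyN]; exact hup
    have h1 : (y ⬝ᵥ (N *ᵥ y)) ^ 2 ≤ (y ⬝ᵥ y) * (ρ i * (y ⬝ᵥ (N *ᵥ y))) :=
      le_trans hCS (mul_le_mul_of_nonneg_left hupper' hyypos.le)
    have h2 : (y ⬝ᵥ y) * (ρ i * (y ⬝ᵥ (N *ᵥ y))) < (y ⬝ᵥ y) * (t * (y ⬝ᵥ (N *ᵥ y))) := by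
      apply mul_lt_mul_of_pos_left _ hyypos
      exact mul_lt_mul_of_pos_right htρ hyNypos
    have h3 : (y ⬝ᵥ y) * (t * (y ⬝ᵥ (N *ᵥ y))) ≤ (y ⬝ᵥ (N *ᵥ y)) * (y ⬝ᵥ (N *ᵥ y)) := by
      nlinarith [mul_le_mul_of_nonneg_right hr hyNypos.le]
    nlinarith [h1, h2, h3]
  intro i
  rw [abs_sub_le_iff]
  constructor
  · linarith [partA i]
  · linarith [partB i]
end

section
/- (Theorem 1 of the paper.) Let σ̂_i be the i-th largest singular value of P_opt(Â). Then σ̂_i² ∈ [Δ_i² − (ε_opt + μ(C)), Δ_i² + (ε_opt + μ(C))], where ε_opt = ‖S − P_opt(Â)ᵀ P_opt(Â)‖₂, Δ_i is the i-th largest topic dominance (Δ_i = 0 for i > k), and μ(C) is the topic mingling. -/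
open scoped BigOperators
open Matrix

/-!
Let `r_t ∈ ℝⁿ` be the topic vectors `d ↦ Rel t d`, so that `xᵀ S x = ∑ t, ⟪r_t, x⟫²` and
`‖r_t‖ = Δ_t`. The squared singular values of `P Â` are the eigenvalues of `M = (P Â)ᵀ (P Â)`,
whose quadratic form is within `ε` of that of `S` on unit vectors; so by Courant–Fischer it
suffices to bound `xᵀ S x` on suitable subspaces. On unit vectors of `span {r_0, …, r_i}` (of
dimension `i + 1` once `μ < Δ_i²`, the only case with content) it is at least `Δ_i² - μ`, and
on unit vectors orthogonal to `r_0, …, r_{i-1}` (codimension at most `i`) it is at most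
`Δ_i² + μ`. Both estimates compare the Gram form `‖∑ a_t r_t‖²` with its diagonal
`∑ a_t² ‖r_t‖²`: by Cauchy–Schwarz the off-diagonal part is at most `μ ∑ a_t²`.
-/

open scoped RealInnerProductSpace
open Module (finrank)

section Subspaces

variable {E : Type*} [NormedAddCommGroup E] [InnerProductSpace ℝ E] [FiniteDimensional ℝ E]

lemma exists_norm_eq_one_mem_inf {V W : Submodule ℝ E}
    (h : finrank ℝ E < finrank ℝ V + finrank ℝ W) : ∃ x ∈ V ⊓ W, ‖x‖ = 1 := by
  have hsum := Submodule.finrank_sup_add_finrank_inf_eq V W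
  have hle := Submodule.finrank_le (V ⊔ W)
  obtain ⟨x, hx, hx0⟩ := Submodule.exists_mem_ne_zero_of_ne_bot (p := V ⊓ W) <| by
    rw [Ne, ← Submodule.finrank_eq_zero]; omega
  exact ⟨‖x‖⁻¹ • x, (V ⊓ W).smul_mem _ hx, norm_smul_inv_norm hx0⟩

lemma finrank_le_finrank_orthogonal_add_card {ι : Type*} [Fintype ι] (u : ι → E) :
    finrank ℝ E ≤ finrank ℝ (Submodule.span ℝ (Set.range u))ᗮ + Fintype.card ι := by
  have := (Submodule.span ℝ (Set.range u)).finrank_add_finrank_orthogonal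
  have := finrank_range_le_card (R := ℝ) u
  unfold Set.finrank at this
  omega

end Subspaces

namespace LinearMap.IsSymmetric

variable {E : Type*} [NormedAddCommGroup E] [InnerProductSpace ℝ E] [FiniteDimensional ℝ E]
  {T : E →ₗ[ℝ] E} (hT : T.IsSymmetric) {n : ℕ} (hn : finrank ℝ E = n)

lemma inner_apply_self_eq_sum (x : E) :
    ⟪x, T x⟫ = ∑ j, hT.eigenvalues hn j * ⟪hT.eigenvectorBasis hn j, x⟫ ^ 2 := by
  rw [← (hT.eigenvectorBasis hn).sum_inner_mul_inner x (T x)]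
  refine Finset.sum_congr rfl fun j _ => ?_
  rw [← hT, apply_eigenvectorBasis, real_inner_comm _ x]
  simp only [RCLike.ofReal_real_eq_id, id_eq, real_inner_smul_left]
  ring

lemma le_eigenvalues_of_forall_le_inner {V : Submodule ℝ E} {i : Fin n}
    (hV : i + 1 ≤ finrank ℝ V) {c : ℝ} (hc : ∀ x ∈ V, ‖x‖ = 1 → c ≤ ⟪x, T x⟫) :
    c ≤ hT.eigenvalues hn i := by
  set v := hT.eigenvectorBasis hn
  let u := fun j : Finset.Iio i => v j
  have hW := finrank_le_finrank_orthogonal_add_card u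
  rw [Fintype.card_coe, Fin.card_Iio, hn] at hW
  obtain ⟨x, ⟨hxV, hxW⟩, hx⟩ := exists_norm_eq_one_mem_inf
    (V := V) (W := (Submodule.span ℝ (Set.range u))ᗮ) (by have := i.isLt; omega)
  have hvx : ∀ j < i, ⟪v j, x⟫ = 0 := fun j hj =>
    Submodule.inner_right_of_mem_orthogonal
      (Submodule.subset_span (Set.mem_range_self (f := u) ⟨j, Finset.mem_Iio.mpr hj⟩)) hxW
  calc c ≤ ⟪x, T x⟫ := hc x hxV hx
    _ = ∑ j, hT.eigenvalues hn j * ⟪v j, x⟫ ^ 2 := hT.inner_apply_self_eq_sum hn x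
    _ ≤ ∑ j, hT.eigenvalues hn i * ⟪v j, x⟫ ^ 2 := by
      refine Finset.sum_le_sum fun j _ => ?_
      rcases lt_or_ge j i with hj | hj
      · simp [hvx j hj]
      · gcongr
        exact hT.eigenvalues_antitone hn hj
    _ = hT.eigenvalues hn i := by
      rw [← Finset.mul_sum, v.sum_sq_inner_right, hx, one_pow, mul_one]

lemma eigenvalues_le_of_forall_inner_le {W : Submodule ℝ E} {i : Fin n}
    (hW : n ≤ i + finrank ℝ W) {c : ℝ} (hc : ∀ x ∈ W, ‖x‖ = 1 → ⟪x, T x⟫ ≤ c) :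
    hT.eigenvalues hn i ≤ c := by
  set v := hT.eigenvectorBasis hn
  let u := fun j : Finset.Ioi i => v j
  have hV := finrank_le_finrank_orthogonal_add_card u
  rw [Fintype.card_coe, Fin.card_Ioi, hn] at hV
  obtain ⟨x, ⟨hxV, hxW⟩, hx⟩ := exists_norm_eq_one_mem_inf
    (V := (Submodule.span ℝ (Set.range u))ᗮ) (W := W) (by have := i.isLt; omega)
  have hvx : ∀ j > i, ⟪v j, x⟫ = 0 := fun j hj =>
    Submodule.inner_right_of_mem_orthogonal
      (Submodule.subset_span (Set.mem_range_self (f := u) ⟨j, Finset.mem_Ioi.mpr hj⟩)) hxV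
  calc hT.eigenvalues hn i = ∑ j, hT.eigenvalues hn i * ⟪v j, x⟫ ^ 2 := by
        rw [← Finset.mul_sum, v.sum_sq_inner_right, hx, one_pow, mul_one]
    _ ≤ ∑ j, hT.eigenvalues hn j * ⟪v j, x⟫ ^ 2 := by
      refine Finset.sum_le_sum fun j _ => ?_
      rcases lt_or_ge i j with hj | hj
      · simp [hvx j hj]
      · gcongr
        exact hT.eigenvalues_antitone hn hj
    _ = ⟪x, T x⟫ := (hT.inner_apply_self_eq_sum hn x).symm
    _ ≤ c := hc x hxW hx

end LinearMap.IsSymmetric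

section Mingling

variable {E : Type*} [NormedAddCommGroup E] [InnerProductSpace ℝ E]
  {ι : Type*} [Fintype ι] [DecidableEq ι]

noncomputable def mingling (u : ι → E) : ℝ :=
  √(∑ t, ∑ t', if t ≠ t' then ⟪u t, u t'⟫ ^ 2 else 0)

lemma mingling_nonneg (u : ι → E) : 0 ≤ mingling u := Real.sqrt_nonneg _

lemma mingling_comp_le {ι' : Type*} [Fintype ι'] [DecidableEq ι'] (u : ι → E) (e : ι' ↪ ι) :
    mingling (u ∘ e) ≤ mingling u := by
  refine Real.sqrt_le_sqrt ?_
  let F : ι → ι → ℝ := fun t t' => if t ≠ t' then ⟪u t, u t'⟫ ^ 2 else 0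
  have hF : ∀ t t', 0 ≤ F t t' := fun t t' => by positivity
  calc ∑ j, ∑ j', (if j ≠ j' then ⟪u (e j), u (e j')⟫ ^ 2 else 0)
      = ∑ t ∈ Finset.univ.map e, ∑ t' ∈ Finset.univ.map e, F t t' := by
        simp only [Finset.sum_map, F, e.injective.ne_iff]
    _ ≤ ∑ t ∈ Finset.univ.map e, ∑ t', F t t' :=
        Finset.sum_le_sum fun t _ =>
          Finset.sum_le_sum_of_subset_of_nonneg (Finset.subset_univ _) fun t' _ _ => hF t t'
    _ ≤ ∑ t, ∑ t', F t t' :=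
        Finset.sum_le_sum_of_subset_of_nonneg (Finset.subset_univ _) fun t _ _ =>
          Finset.sum_nonneg fun t' _ => hF t t'

lemma norm_sq_sum_smul_eq (u : ι → E) (a : ι → ℝ) :
    ‖∑ t, a t • u t‖ ^ 2 = ∑ t, a t ^ 2 * ‖u t‖ ^ 2 +
      ∑ p : ι × ι, (if p.1 ≠ p.2 then ⟪u p.1, u p.2⟫ else 0) * (a p.1 * a p.2) := by
  rw [← real_inner_self_eq_norm_sq, Fintype.sum_prod_type, ← Finset.sum_add_distrib]
  simp only [sum_inner, inner_sum, real_inner_smul_left, real_inner_smul_right]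
  refine Finset.sum_congr rfl fun t _ => ?_
  rw [Fintype.sum_eq_add_sum_compl t, Fintype.sum_eq_add_sum_compl t fun t' =>
      (if t ≠ t' then ⟪u t, u t'⟫ else 0) * (a t * a t'), if_neg (not_not.2 rfl),
    zero_mul, zero_add, real_inner_self_eq_norm_sq]
  congr 1
  · ring
  refine Finset.sum_congr rfl fun t' ht' => ?_
  rw [if_pos fun h => Finset.mem_compl.1 ht' (Finset.mem_singleton.2 h.symm), real_inner_comm]
  ring

lemma abs_norm_sq_sum_smul_sub_le (u : ι → E) (a : ι → ℝ) :
    |‖∑ t, a t • u t‖ ^ 2 - ∑ t, a t ^ 2 * ‖u t‖ ^ 2| ≤ mingling u * ∑ t, a t ^ 2 := by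
  rw [norm_sq_sum_smul_eq, add_sub_cancel_left]
  have hcs := Finset.sum_mul_sq_le_sq_mul_sq Finset.univ
    (fun p : ι × ι => if p.1 ≠ p.2 then ⟪u p.1, u p.2⟫ else 0) (fun p => a p.1 * a p.2)
  have hoff : ∑ p : ι × ι, (if p.1 ≠ p.2 then ⟪u p.1, u p.2⟫ else 0) ^ 2 =
      ∑ t, ∑ t', if t ≠ t' then ⟪u t, u t'⟫ ^ 2 else 0 := by
    rw [Fintype.sum_prod_type]
    simp only [ite_pow, ne_eq, OfNat.ofNat_ne_zero, not_false_eq_true, zero_pow]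
  have hcoeff : ∑ p : ι × ι, (a p.1 * a p.2) ^ 2 = (∑ t, a t ^ 2) ^ 2 := by
    rw [Fintype.sum_prod_type, sq (∑ t, a t ^ 2), Finset.sum_mul_sum]
    simp only [mul_pow]
  rw [hoff, hcoeff] at hcs
  refine (Real.abs_le_sqrt hcs).trans_eq ?_
  rw [Real.sqrt_mul' _ (sq_nonneg _), Real.sqrt_sq (Finset.sum_nonneg fun t _ => sq_nonneg (a t))]
  rfl

lemma sub_mingling_mul_le_norm_sq (u : ι → E) (a : ι → ℝ) {D : ℝ} (hD : ∀ t, D ≤ ‖u t‖ ^ 2) :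
    (D - mingling u) * ∑ t, a t ^ 2 ≤ ‖∑ t, a t • u t‖ ^ 2 := by
  have hdiag : D * ∑ t, a t ^ 2 ≤ ∑ t, a t ^ 2 * ‖u t‖ ^ 2 := by
    rw [Finset.mul_sum]
    exact Finset.sum_le_sum fun t _ => by rw [mul_comm]; gcongr; exact hD t
  have := abs_le.mp (abs_norm_sq_sum_smul_sub_le u a)
  linarith

lemma norm_sq_le_add_mingling_mul (u : ι → E) (a : ι → ℝ) {D : ℝ}
    (hD : ∀ t, a t ≠ 0 → ‖u t‖ ^ 2 ≤ D) :
    ‖∑ t, a t • u t‖ ^ 2 ≤ (D + mingling u) * ∑ t, a t ^ 2 := by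
  have hdiag : ∑ t, a t ^ 2 * ‖u t‖ ^ 2 ≤ D * ∑ t, a t ^ 2 := by
    rw [Finset.mul_sum]
    refine Finset.sum_le_sum fun t _ => ?_
    rcases eq_or_ne (a t) 0 with ht | ht
    · simp [ht]
    · rw [mul_comm]; gcongr; exact hD t ht
  have := abs_le.mp (abs_norm_sq_sum_smul_sub_le u a)
  linarith

lemma linearIndependent_of_mingling_lt {u : ι → E} {D : ℝ} (hD : ∀ t, D ≤ ‖u t‖ ^ 2)
    (hμ : mingling u < D) : LinearIndependent ℝ u := by
  refine Fintype.linearIndependent_iff.mpr fun a ha => ?_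
  have h := sub_mingling_mul_le_norm_sq u a hD
  rw [ha, norm_zero, zero_pow two_ne_zero] at h
  have hsum : ∑ t, a t ^ 2 = 0 :=
    le_antisymm (nonpos_of_mul_nonpos_right h (sub_pos.mpr hμ))
      (Finset.sum_nonneg fun t _ => sq_nonneg (a t))
  intro t
  exact pow_eq_zero_iff two_ne_zero |>.mp <|
    (Finset.sum_eq_zero_iff_of_nonneg fun t _ => sq_nonneg (a t)).mp hsum t (Finset.mem_univ t)

lemma sub_mingling_le_sum_inner_sq {u : ι → E} {a : ι → ℝ} {x : E} (hx : ∑ t, a t • u t = x)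
    (hx1 : ‖x‖ = 1) {D : ℝ} (hD : ∀ t, D ≤ ‖u t‖ ^ 2) :
    D - mingling u ≤ ∑ t, ⟪u t, x⟫ ^ 2 := by
  have hgram := sub_mingling_mul_le_norm_sq u a hD
  have hdot : ∑ t, a t * ⟪u t, x⟫ = 1 := by
    calc ∑ t, a t * ⟪u t, x⟫ = ⟪∑ t, a t • u t, x⟫ := by
          simp only [sum_inner, real_inner_smul_left]
      _ = 1 := by rw [hx, real_inner_self_eq_norm_sq, hx1, one_pow]
  have hcs := Finset.sum_mul_sq_le_sq_mul_sq Finset.univ a fun t => ⟪u t, x⟫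
  rw [hdot, one_pow] at hcs
  rw [hx, hx1, one_pow] at hgram
  have hA := Finset.sum_nonneg fun t (_ : t ∈ Finset.univ) => sq_nonneg (a t)
  have hC := Finset.sum_nonneg fun t (_ : t ∈ Finset.univ) => sq_nonneg ⟪u t, x⟫
  nlinarith

lemma sum_inner_sq_le_add_mingling {u : ι → E} {x : E} (hx1 : ‖x‖ = 1) {D : ℝ} (hD0 : 0 ≤ D)
    (hD : ∀ t, ⟪u t, x⟫ ≠ 0 → ‖u t‖ ^ 2 ≤ D) :
    ∑ t, ⟪u t, x⟫ ^ 2 ≤ D + mingling u := by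
  set y := ∑ t, ⟪u t, x⟫ • u t
  have hgram := norm_sq_le_add_mingling_mul u (fun t => ⟪u t, x⟫) hD
  have hC : ∑ t, ⟪u t, x⟫ ^ 2 ≤ ‖y‖ := by
    calc ∑ t, ⟪u t, x⟫ ^ 2 = ⟪y, x⟫ := by
          simp only [y, sum_inner, real_inner_smul_left, sq]
      _ ≤ ‖y‖ * ‖x‖ := real_inner_le_norm y x
      _ = ‖y‖ := by rw [hx1, mul_one]
  have hC0 := Finset.sum_nonneg fun t (_ : t ∈ Finset.univ) => sq_nonneg ⟪u t, x⟫
  have hμ := mingling_nonneg u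
  nlinarith

end Mingling

section EuclideanSpace

lemma norm_toLp_eq_sqrt {ι : Type*} [Fintype ι] (y : ι → ℝ) :
    ‖(WithLp.toLp 2 y : EuclideanSpace ℝ ι)‖ = √(∑ i, y i ^ 2) := by
  simp [EuclideanSpace.norm_eq]

lemma specNorm_nonneg {r s : ℕ} (N : Matrix (Fin r) (Fin s) ℝ) : 0 ≤ specNorm N :=
  Real.sSup_nonneg fun _ ⟨_, _, hc⟩ => hc ▸ Real.sqrt_nonneg _

lemma norm_toEuclideanLin_le_specNorm {r s : ℕ} (N : Matrix (Fin r) (Fin s) ℝ)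
    {x : EuclideanSpace ℝ (Fin s)} (hx : ‖x‖ = 1) : ‖toEuclideanLin N x‖ ≤ specNorm N := by
  set T := LinearMap.toContinuousLinearMap (toEuclideanLin N)
  refine le_csSup ⟨‖T‖, ?_⟩ ⟨WithLp.ofLp x, ?_, ?_⟩
  · rintro _ ⟨y, hy, rfl⟩
    have h := T.le_opNorm (WithLp.toLp 2 y)
    simpa only [T, LinearMap.coe_toContinuousLinearMap', toLpLin_toLp, Matrix.toLin'_apply,
      norm_toLp_eq_sqrt, hy, Real.sqrt_one, mul_one] using h
  · rw [← Real.sqrt_eq_one, ← norm_toLp_eq_sqrt, WithLp.toLp_ofLp, hx]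
  · rw [toLpLin_apply, norm_toLp_eq_sqrt]

lemma abs_inner_toEuclideanLin_le_specNorm {s : ℕ} (N : Matrix (Fin s) (Fin s) ℝ)
    {x : EuclideanSpace ℝ (Fin s)} (hx : ‖x‖ = 1) : |⟪x, toEuclideanLin N x⟫| ≤ specNorm N :=
  (abs_real_inner_le_norm _ _).trans <| by
    rw [hx, one_mul]; exact norm_toEuclideanLin_le_specNorm N hx

lemma inner_toEuclideanLin_eq_sum_sq {ι κ : Type*} [Fintype ι] [DecidableEq ι] [Fintype κ]
    (R : κ → ι → ℝ) {S : Matrix ι ι ℝ} (hS : ∀ d d', S d d' = ∑ t, R t d * R t d')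
    (x : EuclideanSpace ℝ ι) :
    ⟪x, toEuclideanLin S x⟫ = ∑ t, ⟪WithLp.toLp 2 (R t), x⟫ ^ 2 := by
  simp only [EuclideanSpace.inner_eq_star_dotProduct, toLpLin_apply, dotProduct, mulVec, hS,
    star_trivial, sq, Finset.sum_mul, Finset.mul_sum]
  refine (Finset.sum_congr rfl fun d _ => Finset.sum_comm).trans (Finset.sum_comm.trans ?_)
  refine Finset.sum_congr rfl fun t _ => Finset.sum_comm.trans ?_
  exact Finset.sum_congr rfl fun _ _ => Finset.sum_congr rfl fun _ _ => by ring

lemma abs_inner_sub_sum_sq_le_specNorm {m n k : ℕ} (R : Fin k → Fin n → ℝ)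
    {S : Matrix (Fin n) (Fin n) ℝ} (hS : ∀ d d', S d d' = ∑ t, R t d * R t d')
    (B : Matrix (Fin m) (Fin n) ℝ) {x : EuclideanSpace ℝ (Fin n)} (hx : ‖x‖ = 1) :
    |⟪x, toEuclideanLin (Bᵀ * B) x⟫ - ∑ t, ⟪WithLp.toLp 2 (R t), x⟫ ^ 2|
      ≤ specNorm (S - Bᵀ * B) := by
  rw [← inner_toEuclideanLin_eq_sum_sq R hS x, abs_sub_comm, ← inner_sub_right,
    ← LinearMap.sub_apply, ← map_sub]
  exact abs_inner_toEuclideanLin_le_specNorm _ hx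

lemma mingling_toLp {n k : ℕ} (R : Fin k → Fin n → ℝ) :
    mingling (fun t => (WithLp.toLp 2 (R t) : EuclideanSpace ℝ (Fin n))) =
      √(∑ t, ∑ t', if t ≠ t' then (∑ d, R t d * R t' d) ^ 2 else 0) := by
  simp only [mingling, EuclideanSpace.inner_toLp_toLp, dotProduct, star_trivial, mul_comm]

lemma isSymmetric_toEuclideanLin_transpose_mul_self {m n : ℕ} (M : Matrix (Fin m) (Fin n) ℝ) :
    (toEuclideanLin (Mᵀ * M)).IsSymmetric :=
  isSymmetric_toEuclideanLin_iff.mpr <| by simpa using isHermitian_conjTranspose_mul_self M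

end EuclideanSpace

namespace IsSingularValues

variable {m n : ℕ} {M : Matrix (Fin m) (Fin n) ℝ} {σ : ℕ → ℝ}

lemma sq_eq_eigenvalues (hσ : IsSingularValues M σ) (j : Fin n) :
    σ j ^ 2 = (isSymmetric_toEuclideanLin_transpose_mul_self M).eigenvalues
      finrank_euclideanSpace_fin j := by
  set hT := isSymmetric_toEuclideanLin_transpose_mul_self M
  obtain ⟨hanti, hnonneg, -, hspec⟩ := hσ
  have hH : (Mᵀ * M).IsHermitian := isSymmetric_toEuclideanLin_iff.mp hT
  have hchar : (toEuclideanLin (Mᵀ * M)).charpoly = (Mᵀ * M).charpoly := by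
    rw [toEuclideanLin, toLpLin_eq_toLin, charpoly_toLin]
  have hroots := hT.roots_charpoly_eq_eigenvalues finrank_euclideanSpace_fin
  rw [hchar, hH.roots_charpoly_eq_eigenvalues] at hroots
  have hsq : Antitone fun j : Fin n => σ j ^ 2 := fun a b hab =>
    pow_le_pow_left₀ (hnonneg _) (hanti (Fin.val_le_of_le hab)) 2
  have hlist := List.Perm.eq_of_sortedGE hsq.sortedGE_ofFn
    (hT.eigenvalues_antitone finrank_euclideanSpace_fin).sortedGE_ofFn <| by
      rw [← Multiset.coe_eq_coe, ← Fin.univ_val_map, ← Fin.univ_val_map, hspec hH]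
      simpa only [RCLike.ofReal_real_eq_id, Function.id_comp] using hroots
  exact congrFun (List.ofFn_injective hlist) j

lemma le_sq_of_forall_le_inner (hσ : IsSingularValues M σ)
    {V : Submodule ℝ (EuclideanSpace ℝ (Fin n))} {i : ℕ} (hV : i + 1 ≤ finrank ℝ V) {c : ℝ}
    (hc : ∀ x ∈ V, ‖x‖ = 1 → c ≤ ⟪x, toEuclideanLin (Mᵀ * M) x⟫) : c ≤ σ i ^ 2 := by
  have hi : i < n := by
    have := V.finrank_le
    rw [finrank_euclideanSpace_fin] at this
    omega
  rw [show σ i = σ (⟨i, hi⟩ : Fin n) from rfl, hσ.sq_eq_eigenvalues]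
  exact (isSymmetric_toEuclideanLin_transpose_mul_self M).le_eigenvalues_of_forall_le_inner
    _ hV hc

lemma sq_le_of_forall_inner_le (hσ : IsSingularValues M σ)
    {W : Submodule ℝ (EuclideanSpace ℝ (Fin n))} {i : ℕ} (hW : n ≤ i + finrank ℝ W) {c : ℝ}
    (hc0 : 0 ≤ c) (hc : ∀ x ∈ W, ‖x‖ = 1 → ⟪x, toEuclideanLin (Mᵀ * M) x⟫ ≤ c) :
    σ i ^ 2 ≤ c := by
  by_cases hi : i < n
  · rw [show σ i = σ (⟨i, hi⟩ : Fin n) from rfl, hσ.sq_eq_eigenvalues]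
    exact (isSymmetric_toEuclideanLin_transpose_mul_self M).eigenvalues_le_of_forall_inner_le
      _ hW hc
  · obtain ⟨-, -, hzero, -⟩ := hσ
    rw [hzero i (not_lt.mp hi)]
    simpa using hc0

variable {k : ℕ} {u : Fin k → EuclideanSpace ℝ (Fin n)} {ε : ℝ}

lemma sub_mingling_sub_le_sq (hσ : IsSingularValues M σ)
    (hε : ∀ x, ‖x‖ = 1 → |⟪x, toEuclideanLin (Mᵀ * M) x⟫ - ∑ t, ⟪u t, x⟫ ^ 2| ≤ ε)
    {i : ℕ} (hi : i < k) {D : ℝ} (hD : ∀ t : Fin k, (t : ℕ) ≤ i → D ≤ ‖u t‖ ^ 2)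
    (hμD : mingling u < D) : D - mingling u - ε ≤ σ i ^ 2 := by
  let S := Finset.Iic (⟨i, hi⟩ : Fin k)
  let v : S → EuclideanSpace ℝ (Fin n) := fun t => u t
  have hv : ∀ t, D ≤ ‖v t‖ ^ 2 := fun t => hD t (Finset.mem_Iic.mp t.2 : t.1 ≤ ⟨i, hi⟩)
  have hμv : mingling v ≤ mingling u := mingling_comp_le u (Function.Embedding.subtype _)
  have hli := linearIndependent_of_mingling_lt hv (hμv.trans_lt hμD)
  refine hσ.le_sq_of_forall_le_inner (V := Submodule.span ℝ (Set.range v)) ?_ fun x hx hx1 => ?_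
  · rw [finrank_span_eq_card hli, Fintype.card_coe, Fin.card_Iic]
  obtain ⟨a, ha⟩ := (Submodule.mem_span_range_iff_exists_fun ℝ).mp hx
  have hSx := sub_mingling_le_sum_inner_sq ha hx1 hv
  have hsub : ∑ t : S, ⟪v t, x⟫ ^ 2 ≤ ∑ t, ⟪u t, x⟫ ^ 2 :=
    (Finset.sum_coe_sort S fun t => ⟪u t, x⟫ ^ 2).trans_le
      (Finset.sum_le_univ_sum_of_nonneg fun t => sq_nonneg _)
  have hMx := abs_le.mp (hε x hx1)
  linarith

lemma sq_le_add_mingling_add (hσ : IsSingularValues M σ)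
    (hε : ∀ x, ‖x‖ = 1 → |⟪x, toEuclideanLin (Mᵀ * M) x⟫ - ∑ t, ⟪u t, x⟫ ^ 2| ≤ ε)
    (hε0 : 0 ≤ ε) (i : ℕ) {D : ℝ} (hD0 : 0 ≤ D)
    (hD : ∀ t : Fin k, i ≤ (t : ℕ) → ‖u t‖ ^ 2 ≤ D) : σ i ^ 2 ≤ D + mingling u + ε := by
  let S := Finset.univ.filter fun t : Fin k => (t : ℕ) < i
  let v : S → EuclideanSpace ℝ (Fin n) := fun t => u t
  have hW := finrank_le_finrank_orthogonal_add_card v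
  rw [finrank_euclideanSpace_fin, Fintype.card_coe, Fin.card_filter_val_lt] at hW
  refine hσ.sq_le_of_forall_inner_le (W := (Submodule.span ℝ (Set.range v))ᗮ) (by omega)
    (by linarith [mingling_nonneg u]) fun x hx hx1 => ?_
  have hux : ∀ t, ⟪u t, x⟫ ≠ 0 → ‖u t‖ ^ 2 ≤ D := fun t ht => hD t <| not_lt.mp fun hti =>
    ht <| Submodule.inner_right_of_mem_orthogonal (Submodule.subset_span
      (Set.mem_range_self (f := v) ⟨t, Finset.mem_filter.mpr ⟨Finset.mem_univ t, hti⟩⟩)) hx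
  have hSx := sum_inner_sq_le_add_mingling hx1 hD0 hux
  have hMx := abs_le.mp (hε x hx1)
  linarith

end IsSingularValues

theorem theorem_population_general {m n k : ℕ} (Rel : Fin k → Fin n → ℝ)
    (S : Matrix (Fin n) (Fin n) ℝ)
    (hS : ∀ d d', S d d' = ∑ t, Rel t d * Rel t d')
    (Δ : Fin k → ℝ) (hΔ : ∀ t, Δ t = Real.sqrt (∑ d, Rel t d ^ 2))
    (hsort : ∀ t t' : Fin k, t ≤ t' → Δ t' ≤ Δ t)
    (Δpad : ℕ → ℝ)
    (hΔpad : ∀ i : ℕ, Δpad i = if h : i < k then Δ ⟨i, h⟩ else 0)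
    (μ : ℝ)
    (hμ : μ = Real.sqrt (∑ t, ∑ t',
      if t ≠ t' then (∑ d, Rel t d * Rel t' d) ^ 2 else 0))
    (A : Matrix (Fin m) (Fin n) ℝ)
    (P : Matrix (Fin m) (Fin m) ℝ)
    (σh : ℕ → ℝ) (hσ : IsSingularValues (P * A) σh)
    (ε : ℝ) (hε : ε = specNorm (S - (P * A)ᵀ * (P * A))) :
    ∀ i, σh i ^ 2 ∈ Set.Icc (Δpad i ^ 2 - (ε + μ)) (Δpad i ^ 2 + (ε + μ)) := by
  set u : Fin k → EuclideanSpace ℝ (Fin n) := fun t => WithLp.toLp 2 (Rel t)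
  have hΔu : ∀ t, Δ t = ‖u t‖ := fun t => by rw [hΔ, norm_toLp_eq_sqrt]
  have hε0 : 0 ≤ ε := hε ▸ specNorm_nonneg _
  have hεu := fun x (hx : ‖x‖ = 1) => hε ▸ abs_inner_sub_sum_sq_le_specNorm Rel hS (P * A) hx
  have hΔpad_sq : ∀ i (hi : i < k), Δpad i ^ 2 = ‖u ⟨i, hi⟩‖ ^ 2 := fun i hi => by
    rw [hΔpad, dif_pos hi, hΔu]
  have hsort_sq : ∀ t t' : Fin k, t ≤ t' → ‖u t'‖ ^ 2 ≤ ‖u t‖ ^ 2 := fun t t' h => by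
    rw [← hΔu, ← hΔu]
    exact pow_le_pow_left₀ (by rw [hΔu]; positivity) (hsort t t' h) 2
  intro i
  rw [Set.mem_Icc, hμ, ← mingling_toLp]
  constructor
  · by_cases hlt : mingling u < Δpad i ^ 2
    · have hi : i < k := by
        by_contra hi
        rw [hΔpad, dif_neg hi] at hlt
        linarith [mingling_nonneg u]
      have := hσ.sub_mingling_sub_le_sq hεu hi
        (fun t ht => hΔpad_sq i hi ▸ hsort_sq t ⟨i, hi⟩ ht) hlt
      linarith
    · nlinarith [sq_nonneg (σh i)]
  · have := hσ.sq_le_add_mingling_add hεu hε0 i (sq_nonneg _)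
      fun t ht => hΔpad_sq i (ht.trans_lt t.2) ▸ hsort_sq ⟨i, _⟩ t ht
    linarith

/-- Theorem 1 of the paper. -/
theorem theorem_population {m n k : ℕ} (Rel : Fin k → Fin n → ℝ)
    (hnorm : ∀ d, ∑ t, Rel t d ^ 2 = 1)
    (S : Matrix (Fin n) (Fin n) ℝ)
    (hS : ∀ d d', S d d' = ∑ t, Rel t d * Rel t d')
    (Δ : Fin k → ℝ) (hΔ : ∀ t, Δ t = Real.sqrt (∑ d, Rel t d ^ 2))
    (hsort : ∀ t t' : Fin k, t ≤ t' → Δ t' ≤ Δ t)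
    (Δpad : ℕ → ℝ)
    (hΔpad : ∀ i : ℕ, Δpad i = if h : i < k then Δ ⟨i, h⟩ else 0)
    (μ : ℝ)
    (hμ : μ = Real.sqrt (∑ t, ∑ t',
      if t ≠ t' then (∑ d, Rel t d * Rel t' d) ^ 2 else 0))
    (A : Matrix (Fin m) (Fin n) ℝ)
    (P : Matrix (Fin m) (Fin m) ℝ) (hPsym : Pᵀ = P) (hPidem : P * P = P)
    (σh : ℕ → ℝ) (hσ : IsSingularValues (P * A) σh)
    (ε : ℝ) (hε : ε = specNorm (S - (P * A)ᵀ * (P * A))) :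
    ∀ i, σh i ^ 2 ∈ Set.Icc (Δpad i ^ 2 - (ε + μ)) (Δpad i ^ 2 + (ε + μ)) :=
  theorem_population_general Rel S hS Δ hΔ hsort Δpad hΔpad μ hμ A P σh hσ ε hε
end

section
/- (Simplified Davis–Kahan tangent theorem.) Let A ∈ ℝ^{r×r} be symmetric, [X Y] orthogonal with X ∈ ℝ^{r×p} such that Range(X) is an invariant subspace of A. Let X̃ ∈ ℝ^{r×p} have orthonormal columns, and define the residual R = A X̃ − X̃ X̃ᵀ A X̃. Suppose the eigenvalues of X̃ᵀ A X̃ lie in [α, β], and there exists δ > 0 such that the eigenvalues of Yᵀ A Y all lie in (−∞, α − δ] or all lie in [β + δ, ∞). Then ‖tan Θ(Range(X), Range(X̃))‖₂ ≤ ‖R‖₂ / δ. -/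
open scoped BigOperators
open Matrix

/-!
Let `x` be a unit right singular vector of `Xᵀ Xt` for a singular value `c > 0` (the cosine of a
canonical angle) and put `z = Yᵀ Xt x`, so that `‖z‖² = 1 - c² = s²`. Since the range of `Y` is
invariant, `Yᵀ A = L Yᵀ` with `L = Yᵀ A Y`; since `R x` is orthogonal to the range of `Xt`, the
component `g = Y z - s² Xt x` of `Y z` orthogonal to that range satisfies `‖g‖ = c s` and
`⟪g, R x⟫ = zᵀ L z - s² xᵀ H x` with `H = Xtᵀ A Xt`. The spectral gap, applied to these two
Rayleigh quotients, gives `|⟪g, R x⟫| ≥ δ s²`, while Cauchy–Schwarz gives `|⟪g, R x⟫| ≤ c s ‖R‖`.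
Hence `s / c ≤ ‖R‖ / δ` for every canonical angle, in particular for the largest one.
-/

namespace Matrix

variable {m n o : Type*} [Fintype m]

lemma isHermitian_transpose_mul_mul {A : Matrix m m ℝ} (hA : Aᵀ = A) (B : Matrix m n ℝ) :
    (Bᵀ * A * B).IsHermitian := by
  rw [IsHermitian, conjTranspose_eq_transpose_of_trivial, transpose_mul, transpose_mul, hA,
    transpose_transpose, Matrix.mul_assoc]

variable [Fintype n] [Fintype o]

lemma mulVec_dotProduct_mulVec {R : Type*} [CommSemiring R] (M : Matrix m n R)
    (N : Matrix m o R) (u : n → R) (v : o → R) :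
    (M *ᵥ u) ⬝ᵥ (N *ᵥ v) = u ⬝ᵥ ((Mᵀ * N) *ᵥ v) := by
  rw [← mulVec_mulVec, ← vecMul_transpose, ← dotProduct_mulVec]

lemma abs_dotProduct_le_sqrt_mul_sqrt (u v : n → ℝ) :
    |u ⬝ᵥ v| ≤ √(u ⬝ᵥ u) * √(v ⬝ᵥ v) := by
  have h (w : n → ℝ) : w ⬝ᵥ v ≤ √(w ⬝ᵥ w) * √(v ⬝ᵥ v) := by
    simpa [dotProduct, sq] using Real.sum_mul_le_sqrt_mul_sqrt Finset.univ w v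
  refine abs_le.2 ⟨?_, h u⟩
  linarith [show -(u ⬝ᵥ v) ≤ _ by simpa using h (-u)]

namespace IsHermitian

variable [DecidableEq n] {P : Matrix n n ℝ}

lemma exists_dotProduct_self_eq_one_mulVec_eq (hP : P.IsHermitian) (i : n) :
    ∃ x : n → ℝ, x ⬝ᵥ x = 1 ∧ P *ᵥ x = hP.eigenvalues i • x := by
  refine ⟨hP.eigenvectorBasis i, ?_, hP.mulVec_eigenvectorBasis i⟩
  have := hP.eigenvectorBasis.orthonormal.1 i
  rw [EuclideanSpace.norm_eq] at this
  simpa [dotProduct, sq] using this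

open scoped MatrixOrder in
lemma dotProduct_mulVec_le_of_eigenvalues_le (hP : P.IsHermitian) {a : ℝ}
    (h : ∀ i, hP.eigenvalues i ≤ a) (x : n → ℝ) : x ⬝ᵥ P *ᵥ x ≤ a * (x ⬝ᵥ x) := by
  have hle : P ≤ algebraMap ℝ _ a := le_algebraMap_of_spectrum_le (by
    rw [hP.spectrum_real_eq_range_eigenvalues]; rintro _ ⟨i, rfl⟩; exact h i) hP.isSelfAdjoint
  simpa [Algebra.algebraMap_eq_smul_one, sub_mulVec, dotProduct_sub, smul_mulVec] using
    (le_iff.1 hle).dotProduct_mulVec_nonneg x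

open scoped MatrixOrder in
lemma le_dotProduct_mulVec_of_le_eigenvalues (hP : P.IsHermitian) {a : ℝ}
    (h : ∀ i, a ≤ hP.eigenvalues i) (x : n → ℝ) : a * (x ⬝ᵥ x) ≤ x ⬝ᵥ P *ᵥ x := by
  have hle : algebraMap ℝ _ a ≤ P := algebraMap_le_of_le_spectrum (by
    rw [hP.spectrum_real_eq_range_eigenvalues]; rintro _ ⟨i, rfl⟩; exact h i) hP.isSelfAdjoint
  simpa [Algebra.algebraMap_eq_smul_one, sub_mulVec, dotProduct_sub, smul_mulVec] using
    (le_iff.1 hle).dotProduct_mulVec_nonneg x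

end IsHermitian

end Matrix

section SpecNorm

variable {r s : ℕ} (M : Matrix (Fin r) (Fin s) ℝ)

lemma specNorm_nonneg_s13 : 0 ≤ specNorm M :=
  Real.sSup_nonneg fun _ ⟨_, _, hc⟩ => hc ▸ Real.sqrt_nonneg _

lemma sqrt_mulVec_dotProduct_le_specNorm {x : Fin s → ℝ} (hx : x ⬝ᵥ x = 1) :
    √((M *ᵥ x) ⬝ᵥ (M *ᵥ x)) ≤ specNorm M := by
  refine le_csSup ⟨frobNorm M, ?_⟩
    ⟨x, by simpa [dotProduct, sq] using hx, by simp [dotProduct, sq]⟩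
  rintro _ ⟨y, hy, rfl⟩
  refine Real.sqrt_le_sqrt (Finset.sum_le_sum fun i _ => ?_)
  simpa [hy, mulVec, dotProduct] using Finset.sum_mul_sq_le_sq_mul_sq Finset.univ (M i) y

lemma abs_dotProduct_mulVec_le_sqrt_mul_specNorm (g : Fin r → ℝ) {x : Fin s → ℝ}
    (hx : x ⬝ᵥ x = 1) : |g ⬝ᵥ (M *ᵥ x)| ≤ √(g ⬝ᵥ g) * specNorm M :=
  (abs_dotProduct_le_sqrt_mul_sqrt _ _).trans
    (mul_le_mul_of_nonneg_left (sqrt_mulVec_dotProduct_le_specNorm M hx) (Real.sqrt_nonneg _))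

variable {M} in
lemma IsSingularValues.exists_dotProduct_self_eq_one_mulVec_eq {σ : ℕ → ℝ}
    (hσ : IsSingularValues M σ) {i : ℕ} (hi : i < s) :
    ∃ x : Fin s → ℝ, x ⬝ᵥ x = 1 ∧ (Mᵀ * M) *ᵥ x = σ i ^ 2 • x := by
  have hH : (Mᵀ * M).IsHermitian := by
    simpa using isHermitian_transpose_mul_mul transpose_one M
  obtain ⟨j, -, hj⟩ := Multiset.mem_map.1 <| hσ.2.2.2 hH ▸
    Multiset.mem_map_of_mem (fun i : Fin s => σ i ^ 2) (Finset.mem_univ_val (⟨i, hi⟩ : Fin s))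
  rw [← hj]
  exact hH.exists_dotProduct_self_eq_one_mulVec_eq j

end SpecNorm

section InvariantSubspace

variable {m n o k : Type*} [Fintype m] [Fintype n] [Fintype o]
  {A : Matrix m m ℝ} {X : Matrix m n ℝ} {Y : Matrix m o ℝ} {Xt : Matrix m k ℝ}

lemma transpose_mul_eq_transpose_mul_mul_mul_transpose [DecidableEq m] {M : Matrix n n ℝ}
    (hAX : A * X = X * M) (hYX : Yᵀ * X = 0) (hcomplete : X * Xᵀ + Y * Yᵀ = 1) :
    Yᵀ * A = Yᵀ * A * Y * Yᵀ := by
  calc Yᵀ * A = Yᵀ * A * (X * Xᵀ + Y * Yᵀ) := by rw [hcomplete, Matrix.mul_one]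
    _ = Yᵀ * X * M * Xᵀ + Yᵀ * A * Y * Yᵀ := by
        simp only [Matrix.mul_add, ← Matrix.mul_assoc, Matrix.mul_assoc Yᵀ A X, hAX]
    _ = Yᵀ * A * Y * Yᵀ := by rw [hYX, Matrix.zero_mul, Matrix.zero_mul, zero_add]

lemma transpose_mul_add_transpose_mul_eq_one [DecidableEq m] [DecidableEq k]
    (hcomplete : X * Xᵀ + Y * Yᵀ = 1) (hXt : Xtᵀ * Xt = 1) :
    (Xᵀ * Xt)ᵀ * (Xᵀ * Xt) + (Yᵀ * Xt)ᵀ * (Yᵀ * Xt) = 1 := by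
  simp only [transpose_mul, transpose_transpose]
  rw [Matrix.mul_assoc, Matrix.mul_assoc, ← Matrix.mul_assoc X, ← Matrix.mul_assoc Y,
    ← Matrix.mul_add, ← Matrix.add_mul, hcomplete, Matrix.one_mul, hXt]

variable [Fintype k]

lemma exists_dotProduct_self_eq_and_dotProduct_residual_eq [DecidableEq o] [DecidableEq k]
    {L : Matrix o o ℝ} (hY : Yᵀ * Y = 1) (hYA : Yᵀ * A = L * Yᵀ) (hXt : Xtᵀ * Xt = 1)
    {x : k → ℝ} {t : ℝ} (hx : x ⬝ᵥ x = 1) (hxt : ((Yᵀ * Xt)ᵀ * (Yᵀ * Xt)) *ᵥ x = t • x) :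
    ∃ g : m → ℝ, g ⬝ᵥ g = t * (1 - t) ∧
      g ⬝ᵥ ((A * Xt - Xt * (Xtᵀ * A * Xt)) *ᵥ x) =
        ((Yᵀ * Xt) *ᵥ x) ⬝ᵥ (L *ᵥ ((Yᵀ * Xt) *ᵥ x)) - t * (x ⬝ᵥ ((Xtᵀ * A * Xt) *ᵥ x)) := by
  have hZZ (v : k → ℝ) : ((Yᵀ * Xt) *ᵥ x) ⬝ᵥ ((Yᵀ * Xt) *ᵥ v) = t * (x ⬝ᵥ v) := by
    rw [dotProduct_comm, mulVec_dotProduct_mulVec, hxt, dotProduct_smul, smul_eq_mul,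
      dotProduct_comm]
  have hYXt (v : k → ℝ) : (Y *ᵥ ((Yᵀ * Xt) *ᵥ x)) ⬝ᵥ (Xt *ᵥ v) = t * (x ⬝ᵥ v) := by
    rw [mulVec_dotProduct_mulVec, hZZ]
  have hXtR : Xtᵀ * (A * Xt - Xt * (Xtᵀ * A * Xt)) = 0 := by
    rw [Matrix.mul_sub, ← Matrix.mul_assoc Xtᵀ Xt, hXt, Matrix.one_mul, ← Matrix.mul_assoc,
      sub_self]
  have hYR : Yᵀ * (A * Xt - Xt * (Xtᵀ * A * Xt)) =
      L * (Yᵀ * Xt) - (Yᵀ * Xt) * (Xtᵀ * A * Xt) := by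
    rw [Matrix.mul_sub, ← Matrix.mul_assoc, ← Matrix.mul_assoc, hYA, Matrix.mul_assoc,
      Matrix.mul_assoc]
  refine ⟨Y *ᵥ ((Yᵀ * Xt) *ᵥ x) - t • (Xt *ᵥ x), ?_, ?_⟩
  · simp only [sub_dotProduct, dotProduct_sub, smul_dotProduct, dotProduct_smul, smul_eq_mul,
      dotProduct_comm (Xt *ᵥ x) (Y *ᵥ ((Yᵀ * Xt) *ᵥ x)), hYXt, mulVec_dotProduct_mulVec Y,
      mulVec_dotProduct_mulVec Xt, hY, hXt, one_mulVec, hZZ, hx]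
    ring
  · rw [sub_dotProduct, smul_dotProduct, mulVec_dotProduct_mulVec Y, mulVec_dotProduct_mulVec Xt,
      hYR, hXtR, zero_mulVec, dotProduct_zero, smul_zero, sub_zero, sub_mulVec, dotProduct_sub,
      ← mulVec_mulVec x L, ← mulVec_mulVec x (Yᵀ * Xt), hZZ]

end InvariantSubspace

lemma mul_le_abs_sub_mul_of_mem_Icc {α β δ t a b : ℝ} (ht : 0 ≤ t) (hb : b ∈ Set.Icc α β)
    (ha : a ≤ (α - δ) * t ∨ (β + δ) * t ≤ a) : δ * t ≤ |a - t * b| := by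
  rcases ha with ha | ha
  · rw [abs_sub_comm]
    exact (show δ * t ≤ t * b - a by nlinarith [hb.1]).trans (le_abs_self _)
  · exact (show δ * t ≤ a - t * b by nlinarith [hb.2]).trans (le_abs_self _)

lemma div_le_div_of_mul_sq_le_mul {c s a δ : ℝ} (hc : 0 < c) (hδ : 0 < δ) (hs : 0 ≤ s)
    (ha : 0 ≤ a) (h : δ * s ^ 2 ≤ c * s * a) : s / c ≤ a / δ := by
  rw [div_le_div_iff₀ hc hδ]
  rcases hs.eq_or_lt with rfl | hs
  · simp; positivity
  · nlinarith

lemma sqrt_one_sub_sq_div_le_specNorm_div {r p q : ℕ} {A : Matrix (Fin r) (Fin r) ℝ}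
    (hA : Aᵀ = A) {X : Matrix (Fin r) (Fin p) ℝ} {Y : Matrix (Fin r) (Fin q) ℝ}
    {M : Matrix (Fin p) (Fin p) ℝ} (hAX : A * X = X * M) (hY : Yᵀ * Y = 1) (hXY : Xᵀ * Y = 0)
    (hcomplete : X * Xᵀ + Y * Yᵀ = 1) {Xt : Matrix (Fin r) (Fin p) ℝ} (hXt : Xtᵀ * Xt = 1)
    {α β δ : ℝ} (hδ : 0 < δ)
    (hin : ∀ (hH : (Xtᵀ * A * Xt).IsHermitian) (i : Fin p), hH.eigenvalues i ∈ Set.Icc α β)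
    (hout : (∀ (hL : (Yᵀ * A * Y).IsHermitian) (i : Fin q), hL.eigenvalues i ≤ α - δ) ∨
      (∀ (hL : (Yᵀ * A * Y).IsHermitian) (i : Fin q), β + δ ≤ hL.eigenvalues i))
    {c : ℝ} (hc : 0 < c) {x : Fin p → ℝ} (hx : x ⬝ᵥ x = 1)
    (hxc : ((Xᵀ * Xt)ᵀ * (Xᵀ * Xt)) *ᵥ x = c ^ 2 • x) :
    √(1 - c ^ 2) / c ≤ specNorm (A * Xt - Xt * (Xtᵀ * A * Xt)) / δ := by
  have hYX : Yᵀ * X = 0 := by simpa using congrArg transpose hXY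
  have hxs : ((Yᵀ * Xt)ᵀ * (Yᵀ * Xt)) *ᵥ x = (1 - c ^ 2) • x := by
    rw [eq_sub_of_add_eq' (transpose_mul_add_transpose_mul_eq_one hcomplete hXt), sub_mulVec,
      one_mulVec, hxc, sub_smul, one_smul]
  obtain ⟨g, hgg, hgR⟩ := exists_dotProduct_self_eq_and_dotProduct_residual_eq hY
    (transpose_mul_eq_transpose_mul_mul_mul_transpose hAX hYX hcomplete) hXt hx hxs
  set z := (Yᵀ * Xt) *ᵥ x
  have hzz : z ⬝ᵥ z = 1 - c ^ 2 := by
    rw [mulVec_dotProduct_mulVec, hxs, dotProduct_smul, hx, smul_eq_mul, mul_one]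
  have hs : 0 ≤ 1 - c ^ 2 := hzz ▸ Finset.sum_nonneg fun _ _ => mul_self_nonneg _
  have hH := isHermitian_transpose_mul_mul hA Xt
  have hL := isHermitian_transpose_mul_mul hA Y
  have hxH : x ⬝ᵥ (Xtᵀ * A * Xt) *ᵥ x ∈ Set.Icc α β :=
    ⟨by simpa [hx] using hH.le_dotProduct_mulVec_of_le_eigenvalues (fun i => (hin hH i).1) x,
      by simpa [hx] using hH.dotProduct_mulVec_le_of_eigenvalues_le (fun i => (hin hH i).2) x⟩
  have hzL : z ⬝ᵥ (Yᵀ * A * Y) *ᵥ z ≤ (α - δ) * (1 - c ^ 2) ∨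
      (β + δ) * (1 - c ^ 2) ≤ z ⬝ᵥ (Yᵀ * A * Y) *ᵥ z := by
    rw [← hzz]
    exact hout.imp (fun h => hL.dotProduct_mulVec_le_of_eigenvalues_le (h hL) z)
      (fun h => hL.le_dotProduct_mulVec_of_le_eigenvalues (h hL) z)
  have hgap := mul_le_abs_sub_mul_of_mem_Icc hs hxH hzL
  rw [← hgR] at hgap
  have hbound := abs_dotProduct_mulVec_le_sqrt_mul_specNorm (A * Xt - Xt * (Xtᵀ * A * Xt)) g hx
  rw [hgg, sub_sub_cancel, Real.sqrt_mul hs, Real.sqrt_sq hc.le] at hbound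
  refine div_le_div_of_mul_sq_le_mul hc hδ (Real.sqrt_nonneg _) (specNorm_nonneg_s13 _) ?_
  rw [Real.sq_sqrt hs]
  linarith

theorem davis_kahan_tangent_general {r p : ℕ}
    (A : Matrix (Fin r) (Fin r) ℝ) (hAsym : Aᵀ = A)
    (X : Matrix (Fin r) (Fin p) ℝ) (Y : Matrix (Fin r) (Fin (r - p)) ℝ)
    (hY : Yᵀ * Y = 1) (hXY : Xᵀ * Y = 0)
    (hcomplete : X * Xᵀ + Y * Yᵀ = 1)
    (hinv : ∃ M : Matrix (Fin p) (Fin p) ℝ, A * X = X * M)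
    (Xt : Matrix (Fin r) (Fin p) ℝ) (hXt : Xtᵀ * Xt = 1)
    (R : Matrix (Fin r) (Fin p) ℝ)
    (hR : R = A * Xt - Xt * (Xtᵀ * A * Xt))
    (α β δ : ℝ) (hδ : 0 < δ)
    (hin : ∀ (hH : (Xtᵀ * A * Xt).IsHermitian) (i : Fin p),
      hH.eigenvalues i ∈ Set.Icc α β)
    (hout : (∀ (hH : (Yᵀ * A * Y).IsHermitian) (i : Fin (r - p)),
        hH.eigenvalues i ≤ α - δ) ∨
      (∀ (hH : (Yᵀ * A * Y).IsHermitian) (i : Fin (r - p)),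
        β + δ ≤ hH.eigenvalues i)) :
    ∀ τ : ℕ → ℝ, IsSingularValues (Xᵀ * Xt) τ →
      Real.sqrt (1 - τ (p - 1) ^ 2) / τ (p - 1) ≤ specNorm R / δ := by
  intro τ hτ
  obtain ⟨M, hAX⟩ := hinv
  rcases le_or_gt (τ (p - 1)) 0 with hc | hc
  · -- covers `τ (p - 1) = 0`, where the left side is `0` by the convention `x / 0 = 0`
    exact (div_nonpos_of_nonneg_of_nonpos (Real.sqrt_nonneg _) hc).trans
      (div_nonneg (specNorm_nonneg_s13 R) hδ.le)
  have hp : p - 1 < p := lt_of_not_ge fun h => hc.ne' (hτ.2.2.1 _ h)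
  obtain ⟨x, hx, hxc⟩ := hτ.exists_dotProduct_self_eq_one_mulVec_eq hp
  subst hR
  exact sqrt_one_sub_sq_div_le_specNorm_div hAsym hAX hY hXY hcomplete hXt hδ hin hout hc hx
    hxc

/-- Simplified Davis–Kahan tangent theorem.  The spectral norm of the tangent of
the canonical angle matrix between two `p`-dimensional subspaces with orthonormal
bases `X` and `Xt` is `√(1 - c²)/c`, where `c` is the smallest singular value of
`Xᵀ * Xt` (the cosines of the canonical angles being the singular values). -/
theorem davis_kahan_tangent {r p : ℕ} (hp : 0 < p) (hpr : p ≤ r)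
    (A : Matrix (Fin r) (Fin r) ℝ) (hAsym : Aᵀ = A)
    (X : Matrix (Fin r) (Fin p) ℝ) (Y : Matrix (Fin r) (Fin (r - p)) ℝ)
    (hX : Xᵀ * X = 1) (hY : Yᵀ * Y = 1) (hXY : Xᵀ * Y = 0)
    (hcomplete : X * Xᵀ + Y * Yᵀ = 1)
    (hinv : ∃ M : Matrix (Fin p) (Fin p) ℝ, A * X = X * M)
    (Xt : Matrix (Fin r) (Fin p) ℝ) (hXt : Xtᵀ * Xt = 1)
    (R : Matrix (Fin r) (Fin p) ℝ)
    (hR : R = A * Xt - Xt * (Xtᵀ * A * Xt))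
    (α β δ : ℝ) (hδ : 0 < δ)
    (hin : ∀ (hH : (Xtᵀ * A * Xt).IsHermitian) (i : Fin p),
      hH.eigenvalues i ∈ Set.Icc α β)
    (hout : (∀ (hH : (Yᵀ * A * Y).IsHermitian) (i : Fin (r - p)),
        hH.eigenvalues i ≤ α - δ) ∨
      (∀ (hH : (Yᵀ * A * Y).IsHermitian) (i : Fin (r - p)),
        β + δ ≤ hH.eigenvalues i)) :
    ∀ τ : ℕ → ℝ, IsSingularValues (Xᵀ * Xt) τ →
      Real.sqrt (1 - τ (p - 1) ^ 2) / τ (p - 1) ≤ specNorm R / δ :=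
  davis_kahan_tangent_general A hAsym X Y hY hXY hcomplete hinv Xt hXt R hR α β δ hδ hin hout
end

section
/- In the same setup, the residual R = A X̃ − X̃ X̃ᵀ A X̃ (with A = ÂÂᵀ and X̃ the left singular vectors of D̂) satisfies ‖R‖₂ ≤ Δ̂_max · sqrt(ε̂₀), where Δ̂_max = ‖D̂‖₂ and ε̂₀ = ‖D̄ᵀD̄‖₂ with D̄ = Â − D̂. -/
/-!
Because `X̃ᵀX̃ = 1`, the residual factors as `R = D̄ D̂ᵀ X̃`. In the ℓ² operator norm
`‖D̄‖ = √‖D̄ᵀD̄‖`, `‖D̂ᵀ‖ = ‖D̂‖` is the largest singular value of `D̂`, and `‖X̃‖ ≤ 1`, so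
submultiplicativity gives the bound; `specNorm` is identified with Mathlib's ℓ² operator norm
(a supremum over the unit sphere), where these facts are available.
-/

open scoped BigOperators
open Matrix

open scoped Matrix.Norms.L2Operator

namespace Matrix

variable {𝕜 : Type*} [RCLike 𝕜] {m n : Type*} [Fintype m] [Fintype n] [DecidableEq n]

theorem IsHermitian.l2_opNorm_eq {A : Matrix n n 𝕜} (hA : A.IsHermitian) :
    ‖A‖ = ‖(RCLike.ofReal ∘ hA.eigenvalues : n → 𝕜)‖ := by
  conv_lhs => rw [hA.spectral_theorem]
  rw [Unitary.conjStarAlgAut_apply, ← Unitary.coe_star, CStarRing.norm_mul_coe_unitary,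
    CStarRing.norm_coe_unitary_mul, l2_opNorm_diagonal]

theorem l2_opNorm_le_one_of_conjTranspose_mul_self {X : Matrix m n 𝕜} (hX : Xᴴ * X = 1) :
    ‖X‖ ≤ 1 := by
  have hXX : ‖X‖ * ‖X‖ ≤ 1 := by
    rw [← l2_opNorm_conjTranspose_mul_self, hX, ← diagonal_one, l2_opNorm_diagonal]
    exact (pi_norm_le_iff_of_nonneg zero_le_one).2 fun _ => by simp
  nlinarith [norm_nonneg X]

end Matrix

theorem specNorm_eq_l2_opNorm {r s : ℕ} (M : Matrix (Fin r) (Fin s) ℝ) : specNorm M = ‖M‖ := by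
  rw [l2_opNorm_def, ← ContinuousLinearMap.sSup_sphere_eq_norm, specNorm]
  congr 1
  ext c
  simp only [Set.mem_ofPred_eq, Set.mem_image, mem_sphere_zero_iff_norm, EuclideanSpace.norm_eq,
    Real.norm_eq_abs, sq_abs, Real.sqrt_eq_one]
  constructor
  · rintro ⟨x, hx, rfl⟩
    exact ⟨WithLp.toLp 2 x, by simpa using hx, by simp⟩
  · rintro ⟨y, hy, rfl⟩
    exact ⟨y.ofLp, by simpa using hy, by simp⟩

theorem IsSingularValues.l2_opNorm_le {r s : ℕ} {M : Matrix (Fin r) (Fin s) ℝ} {σ : ℕ → ℝ}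
    (hσ : IsSingularValues M σ) : ‖M‖ ≤ σ 0 := by
  obtain ⟨hanti, hnonneg, -, hspec⟩ := hσ
  have hH : (Mᵀ * M).IsHermitian := by
    simpa using isHermitian_conjTranspose_mul_self M
  have heig : ∀ i, ∃ j : Fin s, σ j ^ 2 = hH.eigenvalues i := fun i => by
    simpa [← hspec hH] using Multiset.mem_map_of_mem hH.eigenvalues (Finset.mem_univ_val i)
  have hsq : ‖M‖ * ‖M‖ ≤ σ 0 * σ 0 := by
    rw [← l2_opNorm_conjTranspose_mul_self, conjTranspose_eq_transpose_of_trivial,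
      hH.l2_opNorm_eq]
    refine (pi_norm_le_iff_of_nonneg (mul_self_nonneg _)).2 fun i => ?_
    obtain ⟨j, hj⟩ := heig i
    have hσj : σ j ≤ σ 0 := hanti (Nat.zero_le j)
    simp only [Function.comp_apply, RCLike.ofReal_real_eq_id, id, ← hj, norm_pow,
      Real.norm_eq_abs, sq_abs]
    nlinarith [hnonneg j]
  exact (mul_self_le_mul_self_iff (norm_nonneg M) (hnonneg 0)).2 hsq

theorem residual_eq_of_transpose_mul_self_eq_one {R k m n : Type*} [CommRing R] [Fintype k]
    [Fintype m] [Fintype n] [DecidableEq k] {A : Matrix m n R} {X : Matrix m k R}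
    (hX : Xᵀ * X = 1) :
    A * Aᵀ * X - X * (Xᵀ * (A * Aᵀ) * X) = (A - X * Xᵀ * A) * (X * Xᵀ * A)ᵀ * X := by
  simp only [Matrix.sub_mul, transpose_mul, transpose_transpose, Matrix.mul_assoc, hX,
    Matrix.mul_one]

theorem residual_norm_bound_general {m n h : ℕ}
    (A : Matrix (Fin m) (Fin n) ℝ)
    (Xt : Matrix (Fin m) (Fin h) ℝ) (hXt : Xtᵀ * Xt = 1)
    (Dh Db : Matrix (Fin m) (Fin n) ℝ)
    (hDh : Dh = Xt * Xtᵀ * A) (hDb : Db = A - Dh)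
    (σh : ℕ → ℝ) (hσh : IsSingularValues Dh σh)
    (Δmax : ℝ) (hΔmax : Δmax = σh 0)
    (εh₀ : ℝ) (hεh₀ : εh₀ = specNorm (Dbᵀ * Db))
    (R : Matrix (Fin m) (Fin h) ℝ)
    (hR : R = (A * Aᵀ) * Xt - Xt * (Xtᵀ * (A * Aᵀ) * Xt)) :
    specNorm R ≤ Δmax * Real.sqrt εh₀ := by
  have hDb_norm : ‖Db‖ = Real.sqrt εh₀ := by
    rw [hεh₀, specNorm_eq_l2_opNorm, ← conjTranspose_eq_transpose_of_trivial,
      l2_opNorm_conjTranspose_mul_self, Real.sqrt_mul_self (norm_nonneg Db)]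
  have hXt_norm : ‖Xt‖ ≤ 1 :=
    l2_opNorm_le_one_of_conjTranspose_mul_self (by rwa [conjTranspose_eq_transpose_of_trivial])
  have hDhT_norm : ‖Dhᵀ‖ ≤ Δmax := by
    rw [← conjTranspose_eq_transpose_of_trivial, l2_opNorm_conjTranspose, hΔmax]
    exact hσh.l2_opNorm_le
  rw [hR, residual_eq_of_transpose_mul_self_eq_one hXt, ← hDh, ← hDb, specNorm_eq_l2_opNorm]
  calc ‖Db * Dhᵀ * Xt‖ ≤ ‖Db‖ * ‖Dhᵀ‖ * ‖Xt‖ :=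
        (l2_opNorm_mul _ _).trans (by gcongr; exact l2_opNorm_mul _ _)
    _ ≤ Real.sqrt εh₀ * Δmax * 1 := by
        rw [hDb_norm]
        gcongr
        exact mul_nonneg (Real.sqrt_nonneg _) ((norm_nonneg _).trans hDhT_norm)
    _ = Δmax * Real.sqrt εh₀ := by ring

theorem residual_norm_bound {m n h : ℕ} (hh : 0 < h)
    (A : Matrix (Fin m) (Fin n) ℝ)
    (Xt : Matrix (Fin m) (Fin h) ℝ) (hXt : Xtᵀ * Xt = 1)
    (Dh Db : Matrix (Fin m) (Fin n) ℝ)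
    (hDh : Dh = Xt * Xtᵀ * A) (hDb : Db = A - Dh)
    (σh : ℕ → ℝ) (hσh : IsSingularValues Dh σh)
    (Δmax : ℝ) (hΔmax : Δmax = σh 0)
    (εh₀ : ℝ) (hεh₀ : εh₀ = specNorm (Dbᵀ * Db))
    (R : Matrix (Fin m) (Fin h) ℝ)
    (hR : R = (A * Aᵀ) * Xt - Xt * (Xtᵀ * (A * Aᵀ) * Xt)) :
    specNorm R ≤ Δmax * Real.sqrt εh₀ :=
  residual_norm_bound_general A Xt hXt Dh Db hDh hDb σh hσh Δmax hΔmax εh₀ hεh₀ R hR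
end
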